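/- arXiv:2206.05247 — 10 statements merged into one kernel-verified Lean document; each statement's English description precedes it below -/
import Mathlib

section
/- Let d ≥ 1. For every tuple (i_0,…,i_{d−1}) ∈ (Fin d)^d, the controlled-order Kraus operator S_{i_0,…,i_{d−1}} := Σ_{j∈Fin d} (E^{(j)}_{i_j} · E^{(j⊕1)}_{i_{j⊕1}} · ⋯ · E^{(j⊕(d−1))}_{i_{j⊕(d−1)}}) ⊗ |j⟩⟨j| equals Σ_{j∈Fin d} s_j · |j⟩⟨i_{j⊖1}| ⊗ |j⟩⟨j|, where s_j = 1 if i_l = l⊕1 for every l ≠ j⊖1 and s_j = 0 otherwise. -/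
open Matrix Kronecker BigOperators Complex

noncomputable def Emat (d : ℕ) (j i : Fin d) : Matrix (Fin d) (Fin d) ℂ :=
  Matrix.single j i 1

noncomputable def P0 (d : ℕ) : Matrix (Fin d × Fin d) (Fin d × Fin d) ℂ :=
  ∑ j : Fin d, Emat d j j ⊗ₖ Emat d j j

noncomputable def Sop (d : ℕ) [NeZero d] (idx : Fin d → Fin d) :
    Matrix (Fin d × Fin d) (Fin d × Fin d) ℂ :=
  ∑ j : Fin d,
    (((List.finRange d).map (fun k => Emat d (j + k) (idx (j + k)))).prod) ⊗ₖ Emat d j j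

/-! A product of matrix units `|a₀⟩⟨b₀| |a₁⟩⟨b₁| ⋯ |aₘ⟩⟨bₘ|` telescopes to `|a₀⟩⟨bₘ|` when every
link `bₖ = aₖ₊₁` holds and vanishes otherwise. In the `j`-th block of `S` the links read
`i_l = l ⊕ 1` for `l = j, j ⊕ 1, …, j ⊕ (d − 2)`, i.e. for every `l ≠ j ⊖ 1`, and the surviving
unit is `|j⟩⟨i_{j⊖1}|`. -/

theorem Matrix.prod_map_range_single_one {n α : Type*} [DecidableEq n] [Fintype n] [Semiring α]
    (a b : ℕ → n) (m : ℕ) :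
    ((List.range (m + 1)).map fun k => single (a k) (b k) (1 : α)).prod =
      if ∀ k < m, b k = a (k + 1) then single (a 0) (b m) 1 else 0 := by
  induction m with
  | zero => simp
  | succ m ih =>
    rw [List.range_succ, List.map_append, List.prod_append, ih]
    simp only [Nat.forall_lt_succ_right, List.map_cons, List.map_nil, List.prod_singleton]
    by_cases hchain : ∀ k < m, b k = a (k + 1) <;> by_cases hlink : b m = a (m + 1) <;>
      simp [*]

open Fin.NatCast Fin.CommRing in
theorem Fin.natCast_pred_eq_neg_one (d : ℕ) [NeZero d] : ((d - 1 : ℕ) : Fin d) = -1 := by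
  rw [Nat.cast_sub NeZero.one_le, Fin.natCast_self, Nat.cast_one, zero_sub]

open Fin.NatCast Fin.CommRing in
theorem Fin.forall_lt_pred_add_natCast_iff {d : ℕ} [NeZero d] (j : Fin d) (P : Fin d → Prop) :
    (∀ k < d - 1, P (j + (k : Fin d))) ↔ ∀ l ≠ j - 1, P l := by
  have natCast_eq_neg_one {k : ℕ} (hk : k < d) : (k : Fin d) = -1 ↔ k = d - 1 := by
    rw [← Fin.natCast_pred_eq_neg_one, Fin.ext_iff, Fin.val_cast_of_lt hk, Fin.val_cast_of_lt (by omega)]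
  constructor
  · intro h l hl
    have hl' : j + ((l - j : Fin d).val : Fin d) = l := by simp
    rw [← hl']
    refine h _ (lt_of_le_of_ne (Nat.le_pred_of_lt (l - j).isLt) fun he => hl ?_)
    rw [← hl', (natCast_eq_neg_one (l - j).isLt).2 he]
    ring
  · intro h k hk
    refine h _ fun he => ?_
    have := (natCast_eq_neg_one (by omega : k < d)).1 (by linear_combination he)
    omega

open Fin.NatCast Fin.CommRing in
theorem prod_map_finRange_Emat_add {d : ℕ} [NeZero d] (idx : Fin d → Fin d) (j : Fin d) :
    ((List.finRange d).map fun k => Emat d (j + k) (idx (j + k))).prod =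
      if ∀ l ≠ j - 1, idx l = l + 1 then Emat d j (idx (j - 1)) else 0 := by
  have hd : d - 1 + 1 = d := Nat.sub_add_cancel NeZero.one_le
  have hrange : (List.finRange d).map (fun k => Emat d (j + k) (idx (j + k))) =
      (List.range (d - 1 + 1)).map fun k : ℕ => Emat d (j + k) (idx (j + k)) := by
    rw [hd, ← List.map_coe_finRange_eq_range, List.map_map]
    simp only [Function.comp_def, Fin.cast_val_eq_self]
  have hlast : j + ((d - 1 : ℕ) : Fin d) = j - 1 := by
    rw [Fin.natCast_pred_eq_neg_one, sub_eq_add_neg]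
  rw [hrange]
  simp only [Emat]
  rw [prod_map_range_single_one, Nat.cast_zero, add_zero, hlast]
  simp only [Nat.cast_add, Nat.cast_one, ← add_assoc]
  exact if_congr (Fin.forall_lt_pred_add_natCast_iff j fun l => idx l = l + 1) rfl rfl

/-- the controlled-order Kraus operator `S_{i_0,…,i_{d−1}}` equals
`Σ_j s_j · |j⟩⟨i_{j⊖1}| ⊗ |j⟩⟨j|` with `s_j = 1` iff `i_l = l⊕1` for every `l ≠ j⊖1`. -/
theorem stmt_0 (d : ℕ) [NeZero d] (idx : Fin d → Fin d) :
    Sop d idx = ∑ j : Fin d,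
      (if ∀ l : Fin d, l ≠ j - 1 → idx l = l + 1 then (1 : ℂ) else 0) •
        (Emat d j (idx (j - 1)) ⊗ₖ Emat d j j) := by
  refine Finset.sum_congr rfl fun j _ => ?_
  rw [prod_map_finRange_Emat_add]
  split_ifs <;> simp
end

section
/- Let d ≥ 1 and (i_0,…,i_{d−1}) ∈ (Fin d)^d. Then: (a) if i_l = l⊕1 for every l ∈ Fin d, the controlled-order Kraus operator S_{i_0,…,i_{d−1}} equals P_0 := Σ_{j∈Fin d} |j⟩⟨j| ⊗ |j⟩⟨j|; (b) if there is exactly one l ∈ Fin d with i_l ≠ l⊕1, then, writing j := l⊕1, S_{i_0,…,i_{d−1}} = |j⟩⟨i_{j⊖1}| ⊗ |j⟩⟨j|; (c) if i_l ≠ l⊕1 for at least two distinct values of l, then S_{i_0,…,i_{d−1}} = 0. -/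
open Matrix Kronecker BigOperators Complex

/-! Since `|a⟩⟨b| |c⟩⟨e| = δ_{bc} |a⟩⟨e|`, the ordered product in the `j`-th control block
of `S` collapses to `|j⟩⟨i_{j⊖1}|` when `i_l = l⊕1` for every `l ≠ j⊖1`, and vanishes
otherwise. A single exception `l` thus leaves only the block `j = l⊕1`, two exceptions none. -/

theorem Matrix.list_prod_ofFn_single_one {n R : Type*} [Fintype n] [DecidableEq n] [Semiring R] :
    ∀ {m : ℕ} (a b : Fin (m + 1) → n),
      (List.ofFn fun k => single (a k) (b k) (1 : R)).prod =
        if ∀ k : Fin m, b k.castSucc = a k.succ then single (a 0) (b (Fin.last m)) 1 else 0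
  | 0, a, b => by simp
  | m + 1, a, b => by
    rw [List.ofFn_succ, List.prod_cons,
      list_prod_ofFn_single_one (fun k => a k.succ) (fun k => b k.succ)]
    simp only [Fin.succ_last, Fin.succ_zero_eq_one, Fin.forall_fin_succ, Fin.castSucc_zero,
      Fin.succ_castSucc]
    by_cases hhead : b 0 = a 1
    · simp only [hhead, true_and]
      split_ifs <;> simp [single_mul_single_same]
    · simp only [hhead, false_and, if_false]
      split_ifs <;> simp [single_mul_single_of_ne _ _ _ _ hhead]

theorem Fin.last_eq_neg_one (m : ℕ) : Fin.last m = -1 :=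
  eq_neg_of_add_eq_zero_left (Fin.last_add_one m)

theorem cyclic_prod_Emat (d : ℕ) [NeZero d] (idx : Fin d → Fin d) (j : Fin d) :
    ((List.finRange d).map (fun k => Emat d (j + k) (idx (j + k)))).prod =
      if ∀ l : Fin d, l ≠ j - 1 → idx l = l + 1 then Emat d j (idx (j - 1)) else 0 := by
  obtain ⟨m, rfl⟩ := Nat.exists_eq_succ_of_ne_zero (NeZero.ne d)
  rw [← List.ofFn_eq_map]
  unfold Emat
  rw [Matrix.list_prod_ofFn_single_one, add_zero, Fin.last_eq_neg_one, ← sub_eq_add_neg]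
  congr 1
  refine propext ?_
  calc (∀ k : Fin m, idx (j + k.castSucc) = j + k.succ)
      ↔ ∀ k : Fin (m + 1), k ≠ Fin.last m → idx (j + k) = j + k + 1 := by
        simp [Fin.forall_fin_succ', Fin.castSucc_ne_last, ← Fin.coeSucc_eq_succ, add_assoc]
    _ ↔ ∀ l : Fin (m + 1), l ≠ j - 1 → idx l = l + 1 := by
        refine Equiv.forall_congr (Equiv.addLeft j) fun k => ?_
        simp [Fin.last_eq_neg_one, sub_eq_add_neg]

theorem Sop_eq_sum_ite (d : ℕ) [NeZero d] (idx : Fin d → Fin d) :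
    Sop d idx = ∑ j : Fin d, if ∀ l : Fin d, l ≠ j - 1 → idx l = l + 1
      then Emat d j (idx (j - 1)) ⊗ₖ Emat d j j else 0 := by
  unfold Sop
  refine Finset.sum_congr rfl fun j _ => ?_
  rw [cyclic_prod_Emat]
  split_ifs <;> simp

/-- the three cases for the controlled-order Kraus operators. -/
theorem stmt_1 (d : ℕ) [NeZero d] (idx : Fin d → Fin d) :
    ((∀ l : Fin d, idx l = l + 1) → Sop d idx = P0 d) ∧
    (∀ l : Fin d, idx l ≠ l + 1 → (∀ l' : Fin d, l' ≠ l → idx l' = l' + 1) →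
      Sop d idx = Emat d (l + 1) (idx ((l + 1) - 1)) ⊗ₖ Emat d (l + 1) (l + 1)) ∧
    (∀ l₁ l₂ : Fin d, l₁ ≠ l₂ → idx l₁ ≠ l₁ + 1 → idx l₂ ≠ l₂ + 1 →
      Sop d idx = 0) := by
  refine ⟨fun hall => ?_, fun l hl hrest => ?_, fun l₁ l₂ hne h₁ h₂ => ?_⟩
  · rw [Sop_eq_sum_ite, P0]
    refine Finset.sum_congr rfl fun j _ => ?_
    rw [if_pos fun l _ => hall l, hall, sub_add_cancel]
  · have hcond : ∀ j : Fin d, (∀ l' : Fin d, l' ≠ j - 1 → idx l' = l' + 1) ↔ l + 1 = j := by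
      refine fun j => ⟨fun h => ?_, fun h l' hl' => ?_⟩
      · by_contra hj
        exact hl (h l fun h' => hj (by rw [h', sub_add_cancel]))
      · exact hrest l' (by rwa [← h, add_sub_cancel_right] at hl')
    simp only [Sop_eq_sum_ite, hcond, Fintype.sum_ite_eq]
  · rw [Sop_eq_sum_ite]
    refine Finset.sum_eq_zero fun j _ => if_neg fun h => ?_
    by_cases he : l₁ = j - 1
    · exact h₂ (h l₂ (he ▸ Ne.symm hne))
    · exact h₁ (h l₁ he)
end

section
/- Let d ≥ 1. For every matrix ρ on ℂ^d ⊗ ℂ^d, the controlled-order channel satisfies S(ρ) := Σ_{(i_0,…,i_{d−1})∈(Fin d)^d} S_{i_0,…,i_{d−1}} ρ S_{i_0,…,i_{d−1}}† = P_0 ρ P_0 + Σ_{j∈Fin d} Σ_{l∈Fin d, l≠j} ρ((l,j),(l,j)) · |j⟩⟨j| ⊗ |j⟩⟨j|, where P_0 := Σ_{j∈Fin d} |j⟩⟨j| ⊗ |j⟩⟨j|. -/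
/-!
The `j`-th block of `Sop d idx` is a product of matrix units along the cycle `j, j+1, …, j-1`,
so it vanishes unless `idx` agrees with the cyclic successor `m ↦ m + 1` away from `j - 1`, and
then equals `|j⟩⟨idx (j-1)|`. Hence the `(j, j')` block of `Sop ρ Sop†` survives only when `idx`
agrees with the successor away from both `j - 1` and `j' - 1`. For `j ≠ j'` this forces `idx` to be
the successor, and the blocks add up to `P0 ρ P0` off the diagonal; for `j = j'` the value
`l = idx (j - 1)` is free, giving the terms `ρ((l,j),(l,j))`, the one with `l = j` belonging to
`P0 ρ P0`.
-/

open Matrix Kronecker BigOperators Complex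

theorem Matrix.prod_ofFn_single {ι R : Type*} [DecidableEq ι] [Fintype ι] [Semiring R] :
    ∀ {n : ℕ} (a b : Fin (n + 1) → ι),
    (List.ofFn fun k => single (a k) (b k) (1 : R)).prod =
      if ∀ k : Fin n, b k.castSucc = a k.succ then single (a 0) (b (Fin.last n)) 1 else 0
  | 0, a, b => by simp
  | n + 1, a, b => by
    rw [List.ofFn_succ, List.prod_cons,
      Matrix.prod_ofFn_single (fun k => a k.succ) (fun k => b k.succ)]
    by_cases h : b 0 = a 1 <;> simp [Fin.forall_fin_succ, h]

theorem Matrix.sum_single_mul_mul_sum_single {ι κ κ' R : Type*} [Fintype ι] [DecidableEq ι]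
    [Semiring R] (s : Finset κ) (t : Finset κ') (a b : κ → ι) (a' b' : κ' → ι)
    (M : Matrix ι ι R) :
    (∑ j ∈ s, single (a j) (b j) (1 : R)) * M * (∑ j ∈ t, single (a' j) (b' j) 1) =
      ∑ j ∈ s, ∑ j' ∈ t, single (a j) (b' j') (M (b j) (a' j')) := by
  simp only [Finset.mul_sum, Finset.sum_mul, single_mul_mul_single, one_mul, mul_one]
  exact Finset.sum_comm

theorem Fin.add_last_eq_sub_one {n : ℕ} (j : Fin (n + 1)) : j + Fin.last n = j - 1 := by
  rw [sub_eq_add_neg, ← Fin.neg_last, neg_neg]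

theorem Fin.forall_add_castSucc_iff {n : ℕ} (j : Fin (n + 1)) (P : Fin (n + 1) → Prop) :
    (∀ k : Fin n, P (j + k.castSucc)) ↔ ∀ m ≠ j - 1, P m := by
  rw [← Fin.add_last_eq_sub_one]
  constructor
  · intro h m hm
    obtain ⟨k, hk⟩ := Fin.eq_castSucc_of_ne_last (x := m - j)
      (fun hlast => hm (by rw [← hlast, add_sub_cancel]))
    simpa [hk] using h k
  · intro h k
    exact h _ (by simp)

theorem Function.forall_ne_eq_and_forall_ne_eq_iff {α β : Type*} {f g : α → β} {a b : α}
    (hab : a ≠ b) : ((∀ m ≠ a, f m = g m) ∧ ∀ m ≠ b, f m = g m) ↔ f = g := by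
  refine ⟨fun ⟨ha, hb⟩ => funext fun m => ?_,
    fun h => ⟨fun m _ => congrFun h m, fun m _ => congrFun h m⟩⟩
  by_cases hm : m = a
  · exact hb m (hm ▸ hab)
  · exact ha m hm

theorem Fintype.sum_ite_forall_ne_eq {α β M : Type*} [Fintype α] [DecidableEq α]
    [Fintype β] [AddCommMonoid M] (g : α → β) (a : α)
    [DecidablePred fun f : α → β => ∀ m ≠ a, f m = g m] (F : β → M) :
    ∑ f : α → β, (if ∀ m ≠ a, f m = g m then F (f a) else 0) = ∑ b, F b := by
  rw [← Finset.sum_filter]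
  refine Finset.sum_nbij' (fun f => f a) (Function.update g a) (by simp) (by simp +contextual)
    (fun f hf => ?_) (by simp) (by simp)
  funext m
  by_cases hm : m = a
  · simp [hm]
  · simp only [Finset.mem_filter] at hf
    simp [Function.update_of_ne hm, hf.2 m hm]

theorem P0_eq_sum_single (d : ℕ) : P0 d = ∑ j : Fin d, single (j, j) (j, j) 1 := by
  simp [P0, Emat, single_kronecker_single]

section ControlledOrder

variable {d : ℕ} [NeZero d]

theorem Sop_eq_sum_single (idx : Fin d → Fin d) :
    Sop d idx = ∑ j ∈ Finset.univ.filter (fun j => ∀ m ≠ j - 1, idx m = m + 1),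
      single (j, j) (idx (j - 1), j) 1 := by
  obtain ⟨n, rfl⟩ := Nat.exists_eq_add_one_of_ne_zero (NeZero.ne d)
  rw [Sop, Finset.sum_filter]
  refine Finset.sum_congr rfl fun j _ => ?_
  simp only [Emat, ← List.ofFn_eq_map]
  rw [Matrix.prod_ofFn_single (fun k => j + k) (fun k => idx (j + k))]
  simp only [← Fin.coeSucc_eq_succ, ← add_assoc,
    Fin.forall_add_castSucc_iff j (fun m => idx m = m + 1), Fin.add_last_eq_sub_one, add_zero]
  split_ifs <;> simp [single_kronecker_single]

theorem Sop_mul_mul_conjTranspose (idx : Fin d → Fin d)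
    (ρ : Matrix (Fin d × Fin d) (Fin d × Fin d) ℂ) :
    Sop d idx * ρ * (Sop d idx)ᴴ = ∑ j : Fin d, ∑ j' : Fin d,
      if (∀ m ≠ j - 1, idx m = m + 1) ∧ (∀ m ≠ j' - 1, idx m = m + 1) then
        single (j, j) (j', j') (ρ (idx (j - 1), j) (idx (j' - 1), j'))
      else 0 := by
  rw [Sop_eq_sum_single, conjTranspose_sum]
  simp only [conjTranspose_single, star_one]
  rw [Matrix.sum_single_mul_mul_sum_single]
  simp [Finset.sum_filter, ite_and]

theorem sum_Sop_mul_mul_conjTranspose_block (ρ : Matrix (Fin d × Fin d) (Fin d × Fin d) ℂ)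
    (j j' : Fin d) :
    ∑ idx : Fin d → Fin d,
      (if (∀ m ≠ j - 1, idx m = m + 1) ∧ (∀ m ≠ j' - 1, idx m = m + 1) then
        single (j, j) (j', j') (ρ (idx (j - 1), j) (idx (j' - 1), j'))
      else 0) =
      single (j, j) (j', j') (ρ (j, j) (j', j')) +
        if j = j' then ∑ l ∈ Finset.univ.filter (· ≠ j), single (j, j) (j, j) (ρ (l, j) (l, j))
        else 0 := by
  by_cases hjj : j = j'
  · subst hjj
    simp only [and_self, if_true]
    let F := fun l => single (j, j) (j, j) (ρ (l, j) (l, j))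
    rw [Finset.filter_ne', Finset.add_sum_erase _ F (Finset.mem_univ j)]
    exact Fintype.sum_ite_forall_ne_eq (· + 1) (j - 1) F
  · have hsub : j - 1 ≠ j' - 1 := fun h => hjj (sub_left_injective h)
    simp_rw [Function.forall_ne_eq_and_forall_ne_eq_iff hsub]
    simp [hjj]

end ControlledOrder

/-- explicit form of the controlled-order channel. -/
theorem stmt_2 (d : ℕ) [NeZero d] (ρ : Matrix (Fin d × Fin d) (Fin d × Fin d) ℂ) :
    ∑ idx : Fin d → Fin d, Sop d idx * ρ * (Sop d idx)ᴴ =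
      P0 d * ρ * P0 d +
        ∑ j : Fin d, ∑ l ∈ Finset.univ.filter (fun l : Fin d => l ≠ j),
          ρ (l, j) (l, j) • (Emat d j j ⊗ₖ Emat d j j) := by
  simp_rw [Sop_mul_mul_conjTranspose]
  rw [Finset.sum_comm]
  simp_rw [Finset.sum_comm (s := Finset.univ (α := Fin d → Fin d)),
    sum_Sop_mul_mul_conjTranspose_block, Finset.sum_add_distrib, Finset.sum_ite_eq,
    if_pos (Finset.mem_univ _)]
  congr 1
  · rw [P0_eq_sum_single, Matrix.sum_single_mul_mul_sum_single]
  · simp [Emat, single_kronecker_single, smul_single]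
end

section
/- Let d ≥ 1. Define, for each tuple (i_0,…,i_{d−1}) ∈ (Fin d)^d, the controlled-choice Kraus operator T_{i_0,…,i_{d−1}} := Σ_{j∈Fin d} t_j · |j⟩⟨i_j| ⊗ |j⟩⟨j|, where t_j := ∏_{l≠j} δ_{i_l,l} (i.e., t_j = 1 if i_l = l for every l ≠ j and t_j = 0 otherwise). Then for every matrix ρ on ℂ^d ⊗ ℂ^d, Σ_{(i_0,…,i_{d−1})∈(Fin d)^d} T_{i_0,…,i_{d−1}} ρ T_{i_0,…,i_{d−1}}† = Σ_{(i_0,…,i_{d−1})∈(Fin d)^d} S_{i_0,…,i_{d−1}} ρ S_{i_0,…,i_{d−1}}†; that is, the controlled choice of the d information-erasing channels (with vacuum amplitudes α^{(l)}_{i} = δ_{i,l}) and the controlled order of the d information-erasing channels define the same channel K. -/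
open Matrix Kronecker BigOperators Complex

/-- Controlled-choice Kraus operators with vacuum amplitudes `α^{(l)}_i = δ_{i,l}`. -/
noncomputable def TopKraus (d : ℕ) (idx : Fin d → Fin d) :
    Matrix (Fin d × Fin d) (Fin d × Fin d) ℂ :=
  ∑ j : Fin d, (∏ l ∈ Finset.univ.erase j, (if idx l = l then (1 : ℂ) else 0)) •
    (Emat d j (idx j) ⊗ₖ Emat d j j)

/-! The ordered product `|j⟩⟨i_j| |j⊕1⟩⟨i_{j⊕1}| ⋯` of matrix units telescopes: it equals
`|j⟩⟨i_{j⊖1}|` when `i_l = l ⊕ 1` for every `l ≠ j ⊖ 1`, and vanishes otherwise. So `S_i` is the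
controlled-choice operator `T` of the shifted tuple `l ↦ i_{l⊖1}`, and the two Kraus sums agree
after reindexing by this bijection of `(Fin d)^d`. -/

namespace Matrix

variable {ι R : Type*} [DecidableEq ι] [Fintype ι] [Semiring R]

theorem list_prod_ofFn_single (n : ℕ) (a b : Fin (n + 1) → ι) :
    (List.ofFn fun k => single (a k) (b k) (1 : R)).prod =
      if ∀ k : Fin n, b k.castSucc = a k.succ then single (a 0) (b (Fin.last n)) 1 else 0 := by
  induction n with
  | zero => simp
  | succ n ih =>
    rw [List.ofFn_succ, List.prod_cons, ih (fun k => a k.succ) (fun k => b k.succ)]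
    simp only [Fin.forall_fin_succ, Fin.succ_last, Fin.castSucc_zero, ← Fin.succ_castSucc]
    by_cases h : b 0 = a 1
    · simp [h, single_mul_single_same]
    · simp [h, single_mul_single_of_ne]

end Matrix

theorem Fin.forall_ne_iff_forall_add_succ {n : ℕ} (j : Fin (n + 1)) (P : Fin (n + 1) → Prop) :
    (∀ l, l ≠ j → P l) ↔ ∀ k : Fin n, P (j + k.succ) := by
  refine ⟨fun h k => h _ ?_, fun h l hl => ?_⟩
  · simp
  · obtain ⟨k, hk⟩ := Fin.exists_succ_eq.mpr (sub_ne_zero.mpr hl)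
    have := h k
    rwa [hk, add_sub_cancel] at this

theorem Sop_eq_TopKraus (d : ℕ) [NeZero d] (idx : Fin d → Fin d) :
    Sop d idx = TopKraus d (fun l => idx (l - 1)) := by
  obtain ⟨n, rfl⟩ : ∃ n, d = n + 1 := Nat.exists_eq_succ_of_ne_zero (NeZero.ne d)
  refine Finset.sum_congr rfl fun j _ => ?_
  have hcond : (∀ k : Fin n, idx (j + k.castSucc) = j + k.succ) ↔
      ∀ l ∈ Finset.univ.erase j, idx (l - 1) = l := by
    simp only [Finset.mem_erase, Finset.mem_univ, and_true,
      Fin.forall_ne_iff_forall_add_succ j (fun l => idx (l - 1) = l),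
      ← Fin.coeSucc_eq_succ, ← add_assoc, add_sub_cancel_right]
  have hlast : j + Fin.last n = j - 1 := by
    rw [sub_eq_add_neg, ← Fin.neg_last, neg_neg]
  simp only [Emat, ← List.ofFn_eq_map, Matrix.list_prod_ofFn_single, Finset.prod_boole, hcond,
    add_zero, hlast, ite_smul, one_smul, zero_smul]
  split_ifs
  · rfl
  · exact zero_kronecker _

/-- controlled choice and controlled order of the `d` information-erasing
channels define the same channel `K`. -/
theorem stmt_3 (d : ℕ) [NeZero d] (ρ : Matrix (Fin d × Fin d) (Fin d × Fin d) ℂ) :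
    ∑ idx : Fin d → Fin d, TopKraus d idx * ρ * (TopKraus d idx)ᴴ =
      ∑ idx : Fin d → Fin d, Sop d idx * ρ * (Sop d idx)ᴴ := by
  simp only [Sop_eq_TopKraus]
  exact (Equiv.sum_comp ((Equiv.subRight 1).symm.arrowCongr (Equiv.refl _))
    fun idx => TopKraus d idx * ρ * (TopKraus d idx)ᴴ).symm
end

section
/- (Lemma 1 of the Supplemental Material.) Let d ≥ 1, D ≥ 1, let ρ* be a density matrix on ℂ^D ⊗ ℂ^d, and for each x ∈ Fin d let (A_{x,i})_{i∈Fin m} be a Kraus family encoding from ℂ^D to ℂ^d; set ρ_x := Σ_{i∈Fin m} (A_{x,i} ⊗ I_d) ρ* (A_{x,i} ⊗ I_d)†. Suppose there are unit vectors Φ_0,…,Φ_{d−1} ∈ ℂ^d ⊗ ℂ^d, pairwise orthogonal, such that K(ρ_x) = Φ_x Φ_x† for every x ∈ Fin d. Then each Φ_x lies in the span of the vectors e_j ⊗ e_j (i.e., P_0 Φ_x = Φ_x) and |⟨e_j ⊗ e_j, Φ_x⟩|² = 1/d for all j, x ∈ Fin d; that is, every output state Φ_x is maximally entangled. -/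
/-!
Since `K` annihilates every row indexed by `(l, j)` with `l ≠ j`, a pure output `Φ_x Φ_x†` of
`K` is supported on the vectors `e_j ⊗ e_j`, and the diagonal entry of `K(ρ_x)` at `(j, j)` is
the `j`-th diagonal entry of the partial trace of `ρ_x` over the first factor. An encoding acts
only on that factor and is trace preserving, so it does not change this partial trace: the
weight `|Φ_x(j, j)|²` is a number `q_j` independent of `x`. The `d` orthonormal vectors `Φ_x`
live in the `d`-dimensional span of the `e_j ⊗ e_j`, so the square matrix `(Φ_x(j, j))_{x,j}`
is unitary; its columns are unit vectors as well, whence `d q_j = 1`.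
-/

open Matrix Kronecker BigOperators Complex
open scoped ComplexOrder

/-- The channel `K(ρ) = P₀ ρ P₀ + Σ_j Σ_{l≠j} ρ((l,j),(l,j)) |jj⟩⟨jj|`. -/
noncomputable def Kch (d : ℕ) (ρ : Matrix (Fin d × Fin d) (Fin d × Fin d) ℂ) :
    Matrix (Fin d × Fin d) (Fin d × Fin d) ℂ :=
  P0 d * ρ * P0 d +
    ∑ j : Fin d, ∑ l ∈ Finset.univ.filter (fun l : Fin d => l ≠ j),
      ρ (l, j) (l, j) • (Emat d j j ⊗ₖ Emat d j j)

/-- Standard basis vector `e_j` of `ℂ^d`. -/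
noncomputable def eVec (d : ℕ) (j : Fin d) : Fin d → ℂ := fun i => if i = j then 1 else 0

/-- The vector `e_j ⊗ e_j ∈ ℂ^d ⊗ ℂ^d`. -/
noncomputable def ejj (d : ℕ) (j : Fin d) : Fin d × Fin d → ℂ :=
  fun p => eVec d j p.1 * eVec d j p.2

/-- The encoded state `ρ_x = Σ_i (A_{x,i} ⊗ I) ρ* (A_{x,i} ⊗ I)†`. -/
noncomputable def encode (d D m : ℕ) (A : Fin d → Fin m → Matrix (Fin d) (Fin D) ℂ)
    (ρ : Matrix (Fin D × Fin d) (Fin D × Fin d) ℂ) (x : Fin d) :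
    Matrix (Fin d × Fin d) (Fin d × Fin d) ℂ :=
  ∑ i : Fin m, (A x i ⊗ₖ (1 : Matrix (Fin d) (Fin d) ℂ)) * ρ *
    (A x i ⊗ₖ (1 : Matrix (Fin d) (Fin d) ℂ))ᴴ

namespace Matrix

variable {ι n n' k R : Type*}

def partialTraceLeft [Fintype n] [AddCommMonoid R] (ρ : Matrix (n × k) (n × k) R) : Matrix k k R :=
  of fun j j' => ∑ l, ρ (l, j) (l, j')

theorem partialTraceLeft_apply [Fintype n] [AddCommMonoid R] (ρ : Matrix (n × k) (n × k) R)
    (j j' : k) :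
    partialTraceLeft ρ j j' = (ρ.submatrix (·, j) (·, j')).trace :=
  rfl

theorem submatrix_kronecker_one_mul_mul_conjTranspose [Fintype n'] [Fintype k] [DecidableEq k]
    [CommSemiring R] [StarRing R]
    (A : Matrix n n' R) (ρ : Matrix (n' × k) (n' × k) R) (B : Matrix n n' R) (j j' : k) :
    ((A ⊗ₖ (1 : Matrix k k R)) * ρ * (B ⊗ₖ (1 : Matrix k k R))ᴴ).submatrix (·, j) (·, j') =
      A * ρ.submatrix (·, j) (·, j') * Bᴴ := by
  ext l l'
  simp [mul_apply, one_apply, Fintype.sum_prod_type, Finset.sum_mul, apply_ite star]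

theorem partialTraceLeft_sum_kronecker_one_conj [Fintype ι] [Fintype n] [Fintype n'] [Fintype k]
    [DecidableEq k] [DecidableEq n'] [CommSemiring R] [StarRing R]
    (A : ι → Matrix n n' R) (hA : ∑ i, (A i)ᴴ * A i = 1) (ρ : Matrix (n' × k) (n' × k) R) :
    partialTraceLeft (∑ i, (A i ⊗ₖ (1 : Matrix k k R)) * ρ * (A i ⊗ₖ (1 : Matrix k k R))ᴴ) =
      partialTraceLeft ρ := by
  ext j j'
  calc _ = ∑ i, partialTraceLeft ((A i ⊗ₖ (1 : Matrix k k R)) * ρ *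
          (A i ⊗ₖ (1 : Matrix k k R))ᴴ) j j' := by
        simp only [partialTraceLeft, of_apply, sum_apply]
        exact Finset.sum_comm
    _ = ∑ i, ((A i)ᴴ * A i * ρ.submatrix (·, j) (·, j')).trace := by
        simp only [partialTraceLeft_apply, submatrix_kronecker_one_mul_mul_conjTranspose,
          trace_mul_cycle (A _)]
    _ = _ := by rw [← trace_sum, ← Finset.sum_mul, hA, one_mul, partialTraceLeft_apply]

end Matrix

theorem Emat_kronecker_Emat (d : ℕ) (j i : Fin d) :
    Emat d j i ⊗ₖ Emat d j i = single (j, j) (i, i) 1 := by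
  rw [Emat, single_kronecker_single, one_mul]

theorem P0_eq_diagonal (d : ℕ) : P0 d = diagonal fun p => if p.1 = p.2 then 1 else 0 := by
  ext ⟨a, b⟩ ⟨c, e⟩
  simp only [P0, Emat_kronecker_Emat, Matrix.sum_apply, single_apply, diagonal_apply,
    Prod.mk.injEq]
  rw [Finset.sum_eq_single a (by grind) (by simp)]
  grind

theorem P0_mulVec (d : ℕ) (v : Fin d × Fin d → ℂ) :
    P0 d *ᵥ v = fun p => if p.1 = p.2 then v p else 0 := by
  ext p
  simp [P0_eq_diagonal, mulVec_diagonal]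

theorem Kch_apply_of_fst_ne_snd (d : ℕ) (ρ : Matrix (Fin d × Fin d) (Fin d × Fin d) ℂ)
    {p : Fin d × Fin d} (hp : p.1 ≠ p.2) (q : Fin d × Fin d) : Kch d ρ p q = 0 := by
  simp only [Kch, P0_eq_diagonal, ne_eq, Emat_kronecker_Emat, smul_single, smul_eq_mul, mul_one,
    Matrix.add_apply, mul_diagonal, diagonal_mul, hp, ↓reduceIte, zero_mul, mul_ite, mul_zero,
    ite_self, Matrix.sum_apply, single_apply, Finset.sum_ite_irrel, Finset.sum_const_zero,
    zero_add]
  exact Finset.sum_eq_zero fun j _ => if_neg fun h => hp (by rw [← h.1])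

theorem Kch_apply_diag (d : ℕ) (ρ : Matrix (Fin d × Fin d) (Fin d × Fin d) ℂ) (j : Fin d) :
    Kch d ρ (j, j) (j, j) = partialTraceLeft ρ j j := by
  simp only [Kch, P0_eq_diagonal, ne_eq, Emat_kronecker_Emat, smul_single, smul_eq_mul, mul_one,
    Matrix.add_apply, mul_diagonal, diagonal_mul, ↓reduceIte, one_mul, Matrix.sum_apply,
    single_apply, Prod.mk.injEq, and_self, Finset.sum_ite_irrel, Finset.sum_const_zero,
    Finset.sum_ite_eq', Finset.mem_univ, partialTraceLeft, of_apply]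
  rw [Finset.filter_ne']
  exact Finset.add_sum_erase _ (fun l => ρ (l, j) (l, j)) (Finset.mem_univ j)

theorem star_ejj_dotProduct (d : ℕ) (j : Fin d) (v : Fin d × Fin d → ℂ) :
    star (ejj d j) ⬝ᵥ v = v (j, j) := by
  have : ejj d j = Pi.single (j, j) 1 := by
    ext p
    simp only [ejj, eVec, Pi.single_apply, Prod.ext_iff, ite_zero_mul_ite_zero, one_mul]
  rw [this, Pi.star_single, star_one, single_dotProduct, one_mul]

theorem P0_mulVec_eq_of_Kch_eq_vecMulVec {d : ℕ} {ρ : Matrix (Fin d × Fin d) (Fin d × Fin d) ℂ}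
    {v : Fin d × Fin d → ℂ} (hK : Kch d ρ = vecMulVec v (star v)) : P0 d *ᵥ v = v := by
  ext p
  refine (congrFun (P0_mulVec d v) p).trans (ite_eq_left_iff.mpr fun hp => ?_)
  have h : vecMulVec v (star v) p p = 0 := by rw [← hK, Kch_apply_of_fst_ne_snd d ρ hp]
  rw [vecMulVec_apply, Pi.star_apply, mul_eq_zero, star_eq_zero, or_self] at h
  exact h.symm

theorem dotProduct_eq_sum_diag_of_P0_mulVec {d : ℕ} (v : Fin d × Fin d → ℂ)
    {w : Fin d × Fin d → ℂ} (hw : P0 d *ᵥ w = w) : v ⬝ᵥ w = ∑ j, v (j, j) * w (j, j) := by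
  rw [← hw, P0_mulVec]
  simp [dotProduct, Fintype.sum_prod_type]

theorem diagCoeffs_mem_unitaryGroup {d : ℕ} {Φ : Fin d → Fin d × Fin d → ℂ}
    (hΦ : ∀ x y, star (Φ x) ⬝ᵥ Φ y = if x = y then 1 else 0) (hP0 : ∀ x, P0 d *ᵥ Φ x = Φ x) :
    (of fun x j => Φ x (j, j)) ∈ unitaryGroup (Fin d) ℂ := by
  rw [mem_unitaryGroup_iff]
  ext x y
  have h := hΦ y x
  rw [dotProduct_eq_sum_diag_of_P0_mulVec _ (hP0 x)] at h
  simp only [mul_apply, star_apply, of_apply, one_apply, Pi.star_apply] at h ⊢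
  calc _ = ∑ j, star (Φ y (j, j)) * Φ x (j, j) := Finset.sum_congr rfl fun j _ => mul_comm _ _
    _ = _ := h.trans (if_congr eq_comm rfl rfl)

theorem sum_norm_sq_diag_eq_one {d : ℕ} {Φ : Fin d → Fin d × Fin d → ℂ}
    (hΦ : ∀ x y, star (Φ x) ⬝ᵥ Φ y = if x = y then 1 else 0) (hP0 : ∀ x, P0 d *ᵥ Φ x = Φ x)
    (j : Fin d) : ∑ x, ‖Φ x (j, j)‖ ^ 2 = 1 := by
  have h := congrFun₂ (mem_unitaryGroup_iff'.mp (diagCoeffs_mem_unitaryGroup hΦ hP0)) j j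
  simp only [mul_apply, star_apply, of_apply, one_apply_eq, RCLike.star_def,
    Complex.conj_mul'] at h
  exact_mod_cast h

theorem stmt_7_general (d D m : ℕ)
    (ρstar : Matrix (Fin D × Fin d) (Fin D × Fin d) ℂ)
    (A : Fin d → Fin m → Matrix (Fin d) (Fin D) ℂ)
    (hA : ∀ x : Fin d, ∑ i : Fin m, (A x i)ᴴ * A x i = 1)
    (Φ : Fin d → (Fin d × Fin d → ℂ))
    (hΦ : ∀ x y : Fin d, star (Φ x) ⬝ᵥ Φ y = if x = y then 1 else 0)
    (hK : ∀ x : Fin d, Kch d (encode d D m A ρstar x) = vecMulVec (Φ x) (star (Φ x))) :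
    ∀ x : Fin d, (P0 d).mulVec (Φ x) = Φ x ∧
      ∀ j : Fin d, ‖star (ejj d j) ⬝ᵥ Φ x‖ ^ 2 = 1 / (d : ℝ) := by
  have hP0 : ∀ x, P0 d *ᵥ Φ x = Φ x := fun x => P0_mulVec_eq_of_Kch_eq_vecMulVec (hK x)
  have hweight : ∀ x j, (‖Φ x (j, j)‖ : ℂ) ^ 2 = partialTraceLeft ρstar j j := by
    intro x j
    rw [← partialTraceLeft_sum_kronecker_one_conj (A x) (hA x), ← encode, ← Kch_apply_diag,
      hK x, vecMulVec_apply, Pi.star_apply, RCLike.star_def, Complex.mul_conj']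
  refine fun x => ⟨hP0 x, fun j => ?_⟩
  have hconst : ∀ y, ‖Φ y (j, j)‖ ^ 2 = ‖Φ x (j, j)‖ ^ 2 := fun y =>
    mod_cast (hweight y j).trans (hweight x j).symm
  have hsum := sum_norm_sq_diag_eq_one hΦ hP0 j
  simp only [hconst, Finset.sum_const, Finset.card_univ, Fintype.card_fin, nsmul_eq_mul] at hsum
  rw [star_ejj_dotProduct]
  exact eq_one_div_of_mul_eq_one_right hsum

/-- Lemma 1: if a perfect transmission protocol through the controlled order
of `d` information-erasing channels produces pure orthogonal outputs `Φ_x`, then each `Φ_x`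
lies in the decoherence-free subspace and is maximally entangled. -/
theorem stmt_7 (d D m : ℕ) [NeZero d] [NeZero D]
    (ρstar : Matrix (Fin D × Fin d) (Fin D × Fin d) ℂ)
    (hpos : ρstar.PosSemidef) (htr : ρstar.trace = 1)
    (A : Fin d → Fin m → Matrix (Fin d) (Fin D) ℂ)
    (hA : ∀ x : Fin d, ∑ i : Fin m, (A x i)ᴴ * A x i = 1)
    (Φ : Fin d → (Fin d × Fin d → ℂ))
    (hΦ : ∀ x y : Fin d, star (Φ x) ⬝ᵥ Φ y = if x = y then 1 else 0)
    (hK : ∀ x : Fin d, Kch d (encode d D m A ρstar x) = vecMulVec (Φ x) (star (Φ x))) :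
    ∀ x : Fin d, (P0 d).mulVec (Φ x) = Φ x ∧
      ∀ j : Fin d, ‖star (ejj d j) ⬝ᵥ Φ x‖ ^ 2 = 1 / (d : ℝ) :=
  stmt_7_general d D m ρstar A hA Φ hΦ hK
end

section
/- (Lemma 3 of the Supplemental Material.) Let d, m ≥ 1 and, for each j ∈ Fin d, let v^{(j)}_0,…,v^{(j)}_{m−1} ∈ ℂ^d satisfy Σ_{i∈Fin m} v^{(j)}_i (v^{(j)}_i)† = I_d; set v_j := v^{(j)}_0. Let T be the controlled-choice channel with Kraus operators T_{i_0,…,i_{d−1}} := Σ_{j∈Fin d} (∏_{l≠j} α_{i_l}) · e_j (v^{(j)}_{i_j})† ⊗ |j⟩⟨j|, where α_0 := 1 and α_i := 0 for i ≠ 0. Then ‖v_j‖ ≤ 1 for every j, and for every matrix ρ on ℂ^d ⊗ ℂ^d, T(ρ) := Σ_{(i_0,…,i_{d−1})∈(Fin m)^d} T_{i_0,…,i_{d−1}} ρ T_{i_0,…,i_{d−1}}† = T_{0,…,0} ρ T_{0,…,0}† + Σ_{j∈Fin d} Tr[((I_d − v_j v_j†) ⊗ |j⟩⟨j|) ρ]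 · |j⟩⟨j| ⊗ |j⟩⟨j|, where T_{0,…,0} = Σ_{j∈Fin d} e_j v_j† ⊗ |j⟩⟨j|. -/
open Matrix Kronecker BigOperators Complex

/-- The controlled-choice Kraus operators `T_{i_0,…,i_{d−1}} =
Σ_j (Π_{l≠j} α_{i_l}) e_j (v^{(j)}_{i_j})† ⊗ |j⟩⟨j|` with `α_0 = 1`, `α_i = 0` for `i ≠ 0`. -/
noncomputable def Tkraus (d m : ℕ) [NeZero m] (v : Fin d → Fin m → Fin d → ℂ)
    (idx : Fin d → Fin m) : Matrix (Fin d × Fin d) (Fin d × Fin d) ℂ :=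
  ∑ j : Fin d, (∏ l ∈ Finset.univ.erase j, (if idx l = 0 then (1 : ℂ) else 0)) •
    (vecMulVec (eVec d j) (star (v j (idx j))) ⊗ₖ Emat d j j)

/-!
The coefficient `∏_{l ≠ j} α_{i_l}` of the `j`-th summand of `T_idx` is `1` exactly when `idx`
vanishes off `j`. So in `Σ_idx T_idx ρ T_idx†` a cross term `j ≠ k` survives only for `idx = 0`,
while a diagonal term `j` runs over all values of `i_j`. The cross terms and the `i_j = 0`
diagonal terms reassemble `T_0 ρ T_0†`; each remaining diagonal term is a rank-one conjugation
`(e_j w† ⊗ |j⟩⟨j|) ρ (e_j w† ⊗ |j⟩⟨j|)† = Tr[(w w† ⊗ |j⟩⟨j|) ρ] |j⟩⟨j| ⊗ |j⟩⟨j|`, and the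
completeness relation `Σ_i v_i v_i† = I` turns their sum over `i ≠ 0` into the trace against
`(I - v_0 v_0†) ⊗ |j⟩⟨j|`. The same relation makes `I - v_0 v_0†` positive semidefinite; its
quadratic form at `v_0` is `‖v_0‖² - ‖v_0‖⁴ ≥ 0`, whence `‖v_0‖ ≤ 1`.
-/

theorem Fintype.sum_sum_eq_add_sum_diag_sub {ι A : Type*} [Fintype ι] [AddCommGroup A]
    (F G : ι → ι → A) (h : ∀ j k, j ≠ k → F j k = G j k) :
    ∑ j, ∑ k, F j k = ∑ j, ∑ k, G j k + ∑ j, (F j j - G j j) := by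
  rw [← Finset.sum_add_distrib]
  refine Finset.sum_congr rfl fun j _ => ?_
  have hdiag : ∑ k, (F j k - G j k) = F j j - G j j :=
    Fintype.sum_eq_single j fun k hk => sub_eq_zero.2 (h j k (Ne.symm hk))
  rw [Finset.sum_sub_distrib] at hdiag
  rw [← hdiag, add_sub_cancel]

theorem forall_ne_eq_and_forall_ne_eq_iff {ι κ : Type*} (o : κ) {j k : ι} (hjk : j ≠ k)
    (idx : ι → κ) :
    ((∀ l, l ≠ j → idx l = o) ∧ (∀ l, l ≠ k → idx l = o)) ↔ idx = fun _ => o := by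
  constructor
  · rintro ⟨hj, hk⟩
    funext l
    by_cases hl : l = j
    · exact hk l (hl ▸ hjk)
    · exact hj l hl
  · rintro rfl
    exact ⟨fun _ _ => rfl, fun _ _ => rfl⟩

section ControlledChoice

variable {ι κ R : Type*} [Fintype ι] [DecidableEq ι] [DecidableEq κ] (o : κ)

theorem sum_ite_forall_ne_eq [Fintype κ] (j : ι) {A : Type*} [AddCommMonoid A] (g : κ → A) :
    ∑ idx : ι → κ, (if ∀ l, l ≠ j → idx l = o then g (idx j) else 0) = ∑ i, g i := by
  have hfilter : Finset.univ.filter (fun idx : ι → κ => ∀ l, l ≠ j → idx l = o) =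
      Finset.univ.image (Function.update (fun _ => o) j) := by
    ext idx
    simp only [Finset.mem_filter, Finset.mem_univ, true_and, Finset.mem_image]
    constructor
    · intro h
      refine ⟨idx j, funext fun l => ?_⟩
      by_cases hl : l = j
      · subst hl; simp
      · simp [hl, h l hl]
    · rintro ⟨i, rfl⟩ l hl
      simp [hl]
  rw [← Finset.sum_filter, hfilter,
    Finset.sum_image fun _ _ _ _ h => Function.update_injective _ j h]
  simp

def controlledChoice [AddCommMonoid R] (M : ι → κ → R) (idx : ι → κ) : R :=
  ∑ j, if ∀ l, l ≠ j → idx l = o then M j (idx j) else 0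

theorem controlledChoice_const [AddCommMonoid R] (M : ι → κ → R) :
    controlledChoice o M (fun _ => o) = ∑ j, M j o := by
  simp [controlledChoice]

theorem controlledChoice_mul_mul_star [NonUnitalSemiring R] [StarRing R] (M : ι → κ → R)
    (ρ : R) (idx : ι → κ) :
    controlledChoice o M idx * ρ * star (controlledChoice o M idx) =
      ∑ j, ∑ k, if (∀ l, l ≠ j → idx l = o) ∧ (∀ l, l ≠ k → idx l = o) then
        M j (idx j) * ρ * star (M k (idx k)) else 0 := by
  simp only [controlledChoice, star_sum, Finset.sum_mul, Finset.mul_sum]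
  rw [Finset.sum_comm]
  refine Finset.sum_congr rfl fun j _ => Finset.sum_congr rfl fun k _ => ?_
  split_ifs <;> simp_all

theorem sum_controlledChoice_mul_mul_star [Fintype κ] [NonUnitalRing R] [StarRing R]
    (M : ι → κ → R) (ρ : R) :
    ∑ idx, controlledChoice o M idx * ρ * star (controlledChoice o M idx) =
      controlledChoice o M (fun _ => o) * ρ * star (controlledChoice o M (fun _ => o)) +
        ∑ j, (∑ i, M j i * ρ * star (M j i) - M j o * ρ * star (M j o)) := by
  set F : ι → ι → R := fun j k => ∑ idx : ι → κ,
    if (∀ l, l ≠ j → idx l = o) ∧ (∀ l, l ≠ k → idx l = o) then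
      M j (idx j) * ρ * star (M k (idx k)) else 0
  have hoff : ∀ j k, j ≠ k → F j k = M j o * ρ * star (M k o) := fun j k hjk => by
    simp only [F, forall_ne_eq_and_forall_ne_eq_iff o hjk, Finset.sum_ite_eq', Finset.mem_univ,
      if_true]
  have hdiag : ∀ j, F j j = ∑ i, M j i * ρ * star (M j i) := fun j => by
    simp only [F, and_self, sum_ite_forall_ne_eq o j fun i => M j i * ρ * star (M j i)]
  have hlhs : ∑ idx, controlledChoice o M idx * ρ * star (controlledChoice o M idx) =
      ∑ j, ∑ k, F j k := by
    simp only [F, controlledChoice_mul_mul_star, Finset.sum_comm (γ := ι → κ)]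
  rw [hlhs, Fintype.sum_sum_eq_add_sum_diag_sub F _ hoff, controlledChoice_const, star_sum,
    Finset.sum_mul, Finset.sum_mul]
  simp only [Finset.mul_sum, hdiag]

end ControlledChoice

namespace Matrix

variable {l m n p : Type*} {α : Type*}

theorem sum_kronecker [NonUnitalNonAssocSemiring α] {ι : Type*} (s : Finset ι)
    (A : ι → Matrix l m α) (B : Matrix n p α) :
    (∑ i ∈ s, A i) ⊗ₖ B = ∑ i ∈ s, A i ⊗ₖ B := by
  ext ⟨_, _⟩ ⟨_, _⟩
  simp [Matrix.sum_apply, Finset.sum_mul]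

theorem sub_kronecker [NonUnitalNonAssocRing α] (A₁ A₂ : Matrix l m α) (B : Matrix n p α) :
    (A₁ - A₂) ⊗ₖ B = A₁ ⊗ₖ B - A₂ ⊗ₖ B := by
  ext ⟨_, _⟩ ⟨_, _⟩
  simp [sub_mul]

theorem vecMulVec_star_kronecker_vecMulVec_star [CommSemiring α] [StarRing α]
    (a : l → α) (b : m → α) (c : n → α) (d : p → α) :
    vecMulVec a (star b) ⊗ₖ vecMulVec c (star d) =
      vecMulVec (fun x => a x.1 * c x.2) (star fun y => b y.1 * d y.2) := by
  ext ⟨_, _⟩ ⟨_, _⟩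
  simp only [kronecker_apply, vecMulVec_apply, Pi.star_apply, star_mul']
  ring

theorem vecMulVec_mul_mul_conjTranspose [Fintype n] [CommSemiring α] [StarRing α]
    (u : m → α) (s : n → α) (ρ : Matrix n n α) :
    vecMulVec u (star s) * ρ * (vecMulVec u (star s))ᴴ =
      trace (vecMulVec s (star s) * ρ) • vecMulVec u (star u) := by
  rw [conjTranspose_vecMulVec, star_star, vecMulVec_mul, vecMulVec_mul_vecMulVec,
    vecMulVec_smul, vecMulVec_mul, trace_vecMulVec, dotProduct_comm]

section ComplexOrder

open scoped ComplexOrder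

variable [Fintype n] [DecidableEq n] {𝕜 : Type*} [RCLike 𝕜]

theorem posSemidef_one_sub_vecMulVec_of_sum_eq_one {κ : Type*} [Fintype κ] [DecidableEq κ]
    (w : κ → n → 𝕜) (hw : ∑ i, vecMulVec (w i) (star (w i)) = 1) (o : κ) :
    (1 - vecMulVec (w o) (star (w o))).PosSemidef := by
  rw [← hw, ← Finset.add_sum_erase _ _ (Finset.mem_univ o), add_sub_cancel_left]
  exact posSemidef_sum _ fun i _ => posSemidef_vecMulVec_self_star _

theorem sum_norm_sq_le_one_of_posSemidef (a : n → 𝕜)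
    (ha : (1 - vecMulVec a (star a)).PosSemidef) :
    ∑ i, ‖a i‖ ^ 2 ≤ 1 := by
  set t := ∑ i, ‖a i‖ ^ 2
  have hself : star a ⬝ᵥ a = (t : 𝕜) := by
    simp [t, dotProduct, RCLike.conj_mul]
  have hquad := ha.dotProduct_mulVec_nonneg a
  rw [sub_mulVec, one_mulVec, vecMulVec_mulVec, op_smul_eq_smul, dotProduct_sub,
    dotProduct_smul, hself, smul_eq_mul, ← RCLike.ofReal_mul, ← RCLike.ofReal_sub,
    RCLike.ofReal_nonneg] at hquad
  have ht : 0 ≤ t := by positivity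
  nlinarith

end ComplexOrder

end Matrix

theorem Emat_self_eq_vecMulVec (d : ℕ) (j : Fin d) :
    Emat d j j = vecMulVec (eVec d j) (star (eVec d j)) := by
  have he : eVec d j = Pi.single j 1 := funext fun i => by simp [eVec, Pi.single_apply]
  rw [Emat, he, Pi.star_single, star_one, single_eq_single_vecMulVec_single]

theorem kronecker_Emat_mul_mul_conjTranspose (d : ℕ) (j : Fin d) (w : Fin d → ℂ)
    (ρ : Matrix (Fin d × Fin d) (Fin d × Fin d) ℂ) :
    (vecMulVec (eVec d j) (star w) ⊗ₖ Emat d j j) * ρ *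
        (vecMulVec (eVec d j) (star w) ⊗ₖ Emat d j j)ᴴ =
      trace ((vecMulVec w (star w) ⊗ₖ Emat d j j) * ρ) • (Emat d j j ⊗ₖ Emat d j j) := by
  simp only [Emat_self_eq_vecMulVec, vecMulVec_star_kronecker_vecMulVec_star,
    vecMulVec_mul_mul_conjTranspose]

theorem Tkraus_eq_controlledChoice (d m : ℕ) [NeZero m] (v : Fin d → Fin m → Fin d → ℂ) :
    Tkraus d m v =
      controlledChoice 0 fun j i => vecMulVec (eVec d j) (star (v j i)) ⊗ₖ Emat d j j := by
  funext idx
  simp only [Tkraus, controlledChoice, Finset.prod_boole, Finset.mem_erase, Finset.mem_univ,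
    and_true, ite_smul, one_smul, zero_smul]

theorem sum_kronecker_Emat_mul_mul_conjTranspose_sub {κ : Type*} [Fintype κ] (d : ℕ)
    (j : Fin d) (w : κ → Fin d → ℂ) (hw : ∑ i, vecMulVec (w i) (star (w i)) = 1) (o : κ)
    (ρ : Matrix (Fin d × Fin d) (Fin d × Fin d) ℂ) :
    ∑ i, (vecMulVec (eVec d j) (star (w i)) ⊗ₖ Emat d j j) * ρ *
        (vecMulVec (eVec d j) (star (w i)) ⊗ₖ Emat d j j)ᴴ -
      (vecMulVec (eVec d j) (star (w o)) ⊗ₖ Emat d j j) * ρ *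
        (vecMulVec (eVec d j) (star (w o)) ⊗ₖ Emat d j j)ᴴ =
      trace (((1 - vecMulVec (w o) (star (w o))) ⊗ₖ Emat d j j) * ρ) •
        (Emat d j j ⊗ₖ Emat d j j) := by
  simp only [kronecker_Emat_mul_mul_conjTranspose]
  rw [← Finset.sum_smul, ← trace_sum, ← Finset.sum_mul, ← sum_kronecker, hw, sub_kronecker,
    Matrix.sub_mul, trace_sub, sub_smul]

theorem stmt_10_general (d m : ℕ) [NeZero m]
    (v : Fin d → Fin m → Fin d → ℂ)
    (hv : ∀ j : Fin d,
      ∑ i : Fin m, vecMulVec (v j i) (star (v j i)) = (1 : Matrix (Fin d) (Fin d) ℂ)) :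
    (∀ j : Fin d, Real.sqrt (∑ a : Fin d, ‖v j 0 a‖ ^ 2) ≤ 1) ∧
    (Tkraus d m v (fun _ => 0) =
      ∑ j : Fin d, vecMulVec (eVec d j) (star (v j 0)) ⊗ₖ Emat d j j) ∧
    (∀ ρ : Matrix (Fin d × Fin d) (Fin d × Fin d) ℂ,
      ∑ idx : Fin d → Fin m, Tkraus d m v idx * ρ * (Tkraus d m v idx)ᴴ =
        Tkraus d m v (fun _ => 0) * ρ * (Tkraus d m v (fun _ => 0))ᴴ +
          ∑ j : Fin d,
            (Matrix.trace ((((1 : Matrix (Fin d) (Fin d) ℂ) -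
                vecMulVec (v j 0) (star (v j 0))) ⊗ₖ Emat d j j) * ρ)) •
              (Emat d j j ⊗ₖ Emat d j j)) := by
  refine ⟨fun j => ?_, ?_, fun ρ => ?_⟩
  · exact Real.sqrt_le_one.mpr <| sum_norm_sq_le_one_of_posSemidef _ <|
      posSemidef_one_sub_vecMulVec_of_sum_eq_one _ (hv j) 0
  · rw [Tkraus_eq_controlledChoice, controlledChoice_const]
  · simp only [Tkraus_eq_controlledChoice, ← star_eq_conjTranspose,
      sum_controlledChoice_mul_mul_star]
    simp only [star_eq_conjTranspose,
      sum_kronecker_Emat_mul_mul_conjTranspose_sub d _ _ (hv _)]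

/-- Lemma 3: structure of the controlled-choice channel. -/
theorem stmt_10 (d m : ℕ) [NeZero d] [NeZero m]
    (v : Fin d → Fin m → Fin d → ℂ)
    (hv : ∀ j : Fin d,
      ∑ i : Fin m, vecMulVec (v j i) (star (v j i)) = (1 : Matrix (Fin d) (Fin d) ℂ)) :
    (∀ j : Fin d, Real.sqrt (∑ a : Fin d, ‖v j 0 a‖ ^ 2) ≤ 1) ∧
    (Tkraus d m v (fun _ => 0) =
      ∑ j : Fin d, vecMulVec (eVec d j) (star (v j 0)) ⊗ₖ Emat d j j) ∧
    (∀ ρ : Matrix (Fin d × Fin d) (Fin d × Fin d) ℂ,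
      ∑ idx : Fin d → Fin m, Tkraus d m v idx * ρ * (Tkraus d m v idx)ᴴ =
        Tkraus d m v (fun _ => 0) * ρ * (Tkraus d m v (fun _ => 0))ᴴ +
          ∑ j : Fin d,
            (Matrix.trace ((((1 : Matrix (Fin d) (Fin d) ℂ) -
                vecMulVec (v j 0) (star (v j 0))) ⊗ₖ Emat d j j) * ρ)) •
              (Emat d j j ⊗ₖ Emat d j j)) :=
  stmt_10_general d m v hv
end

section
/- Let d ≥ 1, D ≥ 1, let v_0,…,v_{d−1} ∈ ℂ^D be unit vectors, and let θ_{x,j} ∈ ℝ for x, j ∈ Fin d. Define Ψ_x := (1/√d) Σ_{j∈Fin d} exp(iθ_{x,j}) · v_j ⊗ e_j ∈ ℂ^D ⊗ ℂ^d. Suppose (i) the family (Ψ_x)_{x∈Fin d} is orthonormal, and (ii) the partial trace over the first tensor factor of Ψ_x Ψ_x† is the same d×d matrix for all x ∈ Fin d. Then ⟨v_l, v_j⟩ = 0 for all l ≠ j; in particular the v_j are orthonormal and every Ψ_x is a maximally entangled unit vector. -/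
open Matrix Kronecker BigOperators Complex

noncomputable def PsiVec (d D : ℕ) (v : Fin d → Fin D → ℂ) (θ : Fin d → ℝ) :
    Fin D × Fin d → ℂ :=
  fun p => ((1 / Real.sqrt d : ℝ) : ℂ) * Complex.exp (Complex.I * (θ p.2 : ℂ)) * v p.2 p.1

/-!
Write `Ψ_x = Σ_j U x j • v_j ⊗ e_j` with `U x j = exp(iθ_{x,j}) / √d`. Since the `v_j` are unit
vectors, orthonormality of the `Ψ_x` says that `U` is unitary, so its columns `j ≠ l` are
orthogonal: `Σ_x U x j * conj (U x l) = 0`. The `(j, l)` entry of the marginal of `Ψ_x` is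
`U x j * conj (U x l) * ⟨v_l, v_j⟩`; if `⟨v_l, v_j⟩ ≠ 0`, equality of the marginals makes the
nonzero number `U x j * conj (U x l)` independent of `x`, and the column sum is then `d` times it.
-/

/-- The vector `Σ_k a k • v k ⊗ e_k`. -/
def weightedTensor {ι n : Type*} (a : n → ℂ) (v : n → ι → ℂ) : ι × n → ℂ :=
  fun p => a p.2 * v p.2 p.1

theorem star_weightedTensor_dotProduct {ι n : Type*} [Fintype ι] [Fintype n] (a b : n → ℂ)
    (v : n → ι → ℂ) :
    star (weightedTensor a v) ⬝ᵥ weightedTensor b v =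
      ∑ k, star (a k) * b k * (star (v k) ⬝ᵥ v k) := by
  rw [dotProduct, Fintype.sum_prod_type_right]
  refine Finset.sum_congr rfl fun k _ => ?_
  rw [dotProduct, Finset.mul_sum]
  refine Finset.sum_congr rfl fun i _ => ?_
  simp only [weightedTensor, Pi.star_apply, star_mul']
  ring

theorem sum_weightedTensor_mul_star {ι n : Type*} [Fintype ι] (a : n → ℂ) (v : n → ι → ℂ)
    (j l : n) :
    ∑ i, weightedTensor a v (i, j) * star (weightedTensor a v (i, l)) =
      a j * star (a l) * (star (v l) ⬝ᵥ v j) := by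
  rw [dotProduct, Finset.mul_sum]
  refine Finset.sum_congr rfl fun i _ => ?_
  simp only [weightedTensor, Pi.star_apply, star_mul']
  ring

theorem star_dotProduct_self_eq_one {ι : Type*} [Fintype ι] {w : ι → ℂ}
    (hw : Real.sqrt (∑ i, ‖w i‖ ^ 2) = 1) : star w ⬝ᵥ w = 1 := by
  have hnorm : ‖WithLp.toLp 2 w‖ = 1 := by rwa [EuclideanSpace.norm_eq]
  have h := inner_self_eq_norm_sq_to_K (𝕜 := ℂ) (WithLp.toLp 2 w)
  rw [EuclideanSpace.inner_eq_star_dotProduct, hnorm] at h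
  simpa [dotProduct_comm] using h

/-- Distinct columns of a unitary matrix are orthogonal. -/
theorem Matrix.eq_zero_of_mul_star_col_eq {R n : Type*} [Field R] [StarRing R] [CharZero R]
    [Fintype n] [DecidableEq n] {U : Matrix n n R} (hU : U ∈ unitaryGroup n R) {j l : n}
    (hjl : j ≠ l) {ω : R} (hω : ∀ x, U x j * star (U x l) = ω) : ω = 0 := by
  have hcol : ∑ x, star (U x l) * U x j = 0 := by
    simpa [mul_apply, star_apply, one_apply, hjl.symm] using
      congr_fun₂ (mem_unitaryGroup_iff'.mp hU) l j
  have hsum : (Fintype.card n : R) * ω = 0 := by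
    rw [← hcol, ← nsmul_eq_mul, ← Finset.card_univ, ← Finset.sum_const]
    exact Finset.sum_congr rfl fun x _ => by rw [← hω x, mul_comm]
  exact (mul_eq_zero.mp hsum).resolve_left (Nat.cast_ne_zero.mpr (Fintype.card_pos_iff.mpr ⟨j⟩).ne')

noncomputable def psiCoeff (d : ℕ) (θ : Fin d → ℝ) (k : Fin d) : ℂ :=
  ((1 / Real.sqrt d : ℝ) : ℂ) * exp (I * (θ k : ℂ))

theorem PsiVec_eq (d D : ℕ) (v : Fin d → Fin D → ℂ) (θ : Fin d → ℝ) :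
    PsiVec d D v θ = weightedTensor (psiCoeff d θ) v :=
  rfl

theorem psiCoeff_ne_zero {d : ℕ} (θ : Fin d → ℝ) (k : Fin d) : psiCoeff d θ k ≠ 0 := by
  have hd : (0 : ℝ) < d := Nat.cast_pos.mpr k.pos
  exact mul_ne_zero (ofReal_ne_zero.mpr (one_div_ne_zero (Real.sqrt_pos.mpr hd).ne'))
    (exp_ne_zero _)

theorem stmt_12_general (d D : ℕ)
    (v : Fin d → Fin D → ℂ)
    (hv : ∀ j : Fin d, Real.sqrt (∑ i : Fin D, ‖v j i‖ ^ 2) = 1)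
    (θ : Fin d → Fin d → ℝ)
    (horth : ∀ x y : Fin d,
      star (PsiVec d D v (θ x)) ⬝ᵥ PsiVec d D v (θ y) = if x = y then 1 else 0)
    (hmarg : ∀ x y : Fin d, ∀ j j' : Fin d,
      (∑ i : Fin D, PsiVec d D v (θ x) (i, j) * star (PsiVec d D v (θ x) (i, j'))) =
        ∑ i : Fin D, PsiVec d D v (θ y) (i, j) * star (PsiVec d D v (θ y) (i, j'))) :
    ∀ l j : Fin d, l ≠ j → star (v l) ⬝ᵥ v j = 0 := by
  intro l j hlj
  by_contra hvlj
  set U : Matrix (Fin d) (Fin d) ℂ := of fun x => psiCoeff d (θ x)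
  have hU : U ∈ unitaryGroup (Fin d) ℂ := by
    refine mem_unitaryGroup_iff.mpr (ext fun y x => ?_)
    have h := horth x y
    simp only [PsiVec_eq, star_weightedTensor_dotProduct, star_dotProduct_self_eq_one (hv _),
      mul_one] at h
    simp only [mul_apply, star_apply, one_apply, eq_comm (a := y), ← h, U, of_apply]
    exact Finset.sum_congr rfl fun k _ => mul_comm _ _
  have hconst : ∀ x, U x j * star (U x l) = U l j * star (U l l) := fun x => by
    have h := hmarg x l j l
    simp only [PsiVec_eq, sum_weightedTensor_mul_star] at h
    exact mul_right_cancel₀ hvlj h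
  exact mul_ne_zero (psiCoeff_ne_zero _ _) (star_ne_zero.mpr (psiCoeff_ne_zero _ _))
    (eq_zero_of_mul_star_col_eq hU hlj.symm hconst)

/-- an orthonormal family `Ψ_x = (1/√d) Σ_j exp(iθ_{x,j}) v_j ⊗ e_j` with
identical control marginals forces the unit vectors `v_j` to be pairwise orthogonal. -/
theorem stmt_12 (d D : ℕ) [NeZero d] [NeZero D]
    (v : Fin d → Fin D → ℂ)
    (hv : ∀ j : Fin d, Real.sqrt (∑ i : Fin D, ‖v j i‖ ^ 2) = 1)
    (θ : Fin d → Fin d → ℝ)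
    (horth : ∀ x y : Fin d,
      star (PsiVec d D v (θ x)) ⬝ᵥ PsiVec d D v (θ y) = if x = y then 1 else 0)
    (hmarg : ∀ x y : Fin d, ∀ j j' : Fin d,
      (∑ i : Fin D, PsiVec d D v (θ x) (i, j) * star (PsiVec d D v (θ x) (i, j'))) =
        ∑ i : Fin D, PsiVec d D v (θ y) (i, j) * star (PsiVec d D v (θ y) (i, j'))) :
    ∀ l j : Fin d, l ≠ j → star (v l) ⬝ᵥ v j = 0 :=
  stmt_12_general d D v hv θ horth hmarg
end

section
/- Let d ≥ 1 and D ≥ 1. For every matrix ρ on ℂ^D ⊗ ℂ^d ⊗ ℂ^d satisfying (I_D ⊗ P_0) ρ (I_D ⊗ P_0) = ρ, the channel obtained by applying the controlled-order channel S on the last two tensor factors and the identity on the first factor leaves ρ invariant: Σ_{(i_0,…,i_{d−1})∈(Fin d)^d} (I_D ⊗ S_{i_0,…,i_{d−1}}) ρ (I_D ⊗ S_{i_0,…,i_{d−1}})† = ρ. In particular, for D = d and GHZ₃ := (1/√d) Σ_{j∈Fin d} e_j ⊗ e_j ⊗ e_j, the GHZ state GHZ₃ GHZ₃† is left invariant.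 -/
open Matrix Kronecker BigOperators Complex

/-- The tripartite GHZ state `(1/√d) Σ_j e_j ⊗ e_j ⊗ e_j`. -/
noncomputable def GHZ3 (d : ℕ) : Fin d × (Fin d × Fin d) → ℂ :=
  fun p => if p.1 = p.2.1 ∧ p.2.1 = p.2.2 then ((1 / Real.sqrt d : ℝ) : ℂ) else 0

/-!
Multiplying by `P₀` cuts the `j`-th block of `S_i` down to the cyclic product
`|j⟩⟨i_j| |j+1⟩⟨i_{j+1}| ⋯ |j+d-1⟩⟨i_{j+d-1}| |j⟩⟨j|` of matrix units, which starts and ends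
at `j` and is nonzero exactly when every link matches, i.e. `i_m = m + 1` for all `m`.
Hence `S_i P₀ = P₀` for the shift tuple and `S_i P₀ = 0` for every other tuple. For
`ρ = P ρ P` with `P = I ⊗ P₀` Hermitian, each term `(I ⊗ S_i) ρ (I ⊗ S_i)†` equals
`(I ⊗ S_i P₀) ρ (I ⊗ S_i P₀)†`, so the sum collapses to `P ρ P = ρ`. The GHZ state
satisfies `P · GHZ₃ = GHZ₃`.
-/

theorem Matrix.prod_range_single_mul_single {m R : Type*} [Fintype m] [DecidableEq m]
    [Semiring R] (a b : ℕ → m) (c : m) (N : ℕ) :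
    ((List.range N).map fun k => single (a k) (b k) (1 : R)).prod * single (a N) c 1 =
      if ∀ k < N, b k = a (k + 1) then single (a 0) c 1 else 0 := by
  induction N with
  | zero => simp
  | succ N ih =>
    rw [List.range_succ, List.map_append, List.prod_append, List.map_singleton,
      List.prod_singleton, mul_assoc]
    simp only [Nat.forall_lt_succ_right]
    by_cases h : b N = a (N + 1)
    · rw [h, single_mul_single_same, one_mul, ih]
      simp only [and_true]
    · rw [single_mul_single_of_ne _ _ _ _ h, mul_zero, if_neg (fun H => h H.2)]

open Fin.NatCast in
theorem List.finRange_map_eq_range_map {α : Type*} (n : ℕ) [NeZero n] (f : Fin n → α) :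
    (List.finRange n).map f = (List.range n).map fun k : ℕ => f (k : Fin n) := by
  rw [← List.map_coe_finRange_eq_range, List.map_map]
  congr 1
  funext k
  simp

theorem Matrix.IsHermitian.mul_mul_conjTranspose_eq {n R : Type*} [Fintype n] [Semiring R]
    [StarRing R] {P ρ : Matrix n n R} (hP : P.IsHermitian) (hρ : P * ρ * P = ρ)
    (X : Matrix n n R) :
    X * ρ * Xᴴ = X * P * ρ * (X * P)ᴴ := by
  rw [conjTranspose_mul, hP.eq]
  conv_lhs => rw [← hρ]
  simp only [Matrix.mul_assoc]

theorem Matrix.IsHermitian.mul_vecMulVec_star_mul {n R : Type*} [Fintype n] [CommSemiring R]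
    [StarRing R] {P : Matrix n n R} (hP : P.IsHermitian) {v : n → R} (hv : P *ᵥ v = v) :
    P * vecMulVec v (star v) * P = vecMulVec v (star v) := by
  rw [mul_vecMulVec, hv, vecMulVec_mul, ← hP.eq, ← star_mulVec, hv]

theorem Emat_mul_Emat (d : ℕ) (a b c e : Fin d) :
    Emat d a b * Emat d c e = if b = c then Emat d a e else 0 := by
  unfold Emat
  split_ifs with h
  · rw [h, single_mul_single_same, one_mul]
  · exact single_mul_single_of_ne _ _ _ _ h _

open Fin.NatCast in
theorem cycle_prod_mul_Emat (d : ℕ) [NeZero d] (idx : Fin d → Fin d) (j : Fin d) :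
    ((List.finRange d).map fun k => Emat d (j + k) (idx (j + k))).prod * Emat d j j =
      if idx = (· + 1) then Emat d j j else 0 := by
  have h := Matrix.prod_range_single_mul_single (R := ℂ) (fun k : ℕ => j + k)
    (fun k => idx (j + k)) j d
  simp only [Fin.natCast_self, add_zero, Nat.cast_zero] at h
  rw [List.finRange_map_eq_range_map]
  unfold Emat
  rw [h]
  congr 1
  refine propext ⟨fun H => funext fun m => ?_, fun H k _ => by simp [H, add_assoc]⟩
  simpa [← add_assoc] using H (m - j).val (m - j).isLt

theorem kronecker_Emat_mul_P0 (d : ℕ) (A : Matrix (Fin d) (Fin d) ℂ) (j : Fin d) :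
    (A ⊗ₖ Emat d j j) * P0 d = (A * Emat d j j) ⊗ₖ Emat d j j := by
  rw [P0, Finset.mul_sum, Finset.sum_eq_single j]
  · rw [← mul_kronecker_mul, Emat_mul_Emat, if_pos rfl]
  · intro i _ hij
    rw [← mul_kronecker_mul, Emat_mul_Emat, if_neg (Ne.symm hij), kronecker_zero]
  · simp

theorem Sop_mul_P0 (d : ℕ) [NeZero d] (idx : Fin d → Fin d) :
    Sop d idx * P0 d = if idx = (· + 1) then P0 d else 0 := by
  simp only [Sop, Finset.sum_mul, kronecker_Emat_mul_P0, cycle_prod_mul_Emat]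
  split_ifs <;> simp [P0]

theorem P0_apply (d : ℕ) (p q : Fin d × Fin d) :
    P0 d p q = if p = q ∧ p.1 = p.2 then 1 else 0 := by
  obtain ⟨a, b⟩ := p
  obtain ⟨c, e⟩ := q
  simp only [P0, Emat, Matrix.sum_apply, kroneckerMap_apply, single_apply,
    ite_mul, one_mul, zero_mul, ← ite_and]
  split_ifs with h
  · obtain ⟨⟨rfl, rfl⟩, rfl⟩ := h
    simp
  · refine Finset.sum_eq_zero fun x _ => if_neg ?_
    rintro ⟨⟨rfl, rfl⟩, rfl, rfl⟩
    exact h ⟨rfl, rfl⟩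

theorem P0_isHermitian (d : ℕ) : (P0 d).IsHermitian := by
  simp [P0, IsHermitian, conjTranspose_sum, conjTranspose_kronecker, Emat, conjTranspose_single]

theorem one_kronecker_P0_isHermitian (d D : ℕ) :
    ((1 : Matrix (Fin D) (Fin D) ℂ) ⊗ₖ P0 d).IsHermitian := by
  rw [IsHermitian, conjTranspose_kronecker, conjTranspose_one, (P0_isHermitian d).eq]

theorem one_kronecker_P0_mulVec (d D : ℕ) (v : Fin D × (Fin d × Fin d) → ℂ) :
    ((1 : Matrix (Fin D) (Fin D) ℂ) ⊗ₖ P0 d) *ᵥ v =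
      fun p => if p.2.1 = p.2.2 then v p else 0 := by
  ext ⟨a, b, c⟩
  simp [mulVec, dotProduct, one_apply, P0_apply, Fintype.sum_prod_type, ite_and]

theorem one_kronecker_P0_mulVec_GHZ3 (d : ℕ) :
    ((1 : Matrix (Fin d) (Fin d) ℂ) ⊗ₖ P0 d) *ᵥ GHZ3 d = GHZ3 d := by
  rw [one_kronecker_P0_mulVec]
  funext ⟨a, b, c⟩
  by_cases h : b = c <;> simp [GHZ3, h]

theorem sum_one_kronecker_Sop_conj_eq_self (d D : ℕ) [NeZero d]
    (ρ : Matrix (Fin D × (Fin d × Fin d)) (Fin D × (Fin d × Fin d)) ℂ)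
    (hρ : ((1 : Matrix (Fin D) (Fin D) ℂ) ⊗ₖ P0 d) * ρ *
      ((1 : Matrix (Fin D) (Fin D) ℂ) ⊗ₖ P0 d) = ρ) :
    ∑ idx : Fin d → Fin d,
      ((1 : Matrix (Fin D) (Fin D) ℂ) ⊗ₖ Sop d idx) * ρ *
        ((1 : Matrix (Fin D) (Fin D) ℂ) ⊗ₖ Sop d idx)ᴴ = ρ := by
  have hP := one_kronecker_P0_isHermitian d D
  calc _ = ∑ idx : Fin d → Fin d, if idx = (· + 1) then
        ((1 : Matrix (Fin D) (Fin D) ℂ) ⊗ₖ P0 d) * ρ *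
          ((1 : Matrix (Fin D) (Fin D) ℂ) ⊗ₖ P0 d)ᴴ else 0 := by
        refine Finset.sum_congr rfl fun idx _ => ?_
        rw [hP.mul_mul_conjTranspose_eq hρ, ← mul_kronecker_mul, one_mul, Sop_mul_P0]
        split_ifs <;> simp
    _ = ρ := by rw [Finset.sum_ite_eq', if_pos (Finset.mem_univ _), hP.eq, hρ]

theorem stmt_14_general (d D : ℕ) [NeZero d] :
    (∀ ρ : Matrix (Fin D × (Fin d × Fin d)) (Fin D × (Fin d × Fin d)) ℂ,
      ((1 : Matrix (Fin D) (Fin D) ℂ) ⊗ₖ P0 d) * ρ * ((1 : Matrix (Fin D) (Fin D) ℂ) ⊗ₖ P0 d)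
          = ρ →
        ∑ idx : Fin d → Fin d,
          ((1 : Matrix (Fin D) (Fin D) ℂ) ⊗ₖ Sop d idx) * ρ *
            ((1 : Matrix (Fin D) (Fin D) ℂ) ⊗ₖ Sop d idx)ᴴ = ρ) ∧
    (∑ idx : Fin d → Fin d,
        ((1 : Matrix (Fin d) (Fin d) ℂ) ⊗ₖ Sop d idx) *
            vecMulVec (GHZ3 d) (star (GHZ3 d)) *
          ((1 : Matrix (Fin d) (Fin d) ℂ) ⊗ₖ Sop d idx)ᴴ =
      vecMulVec (GHZ3 d) (star (GHZ3 d))) :=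
  ⟨sum_one_kronecker_Sop_conj_eq_self d D,
    sum_one_kronecker_Sop_conj_eq_self d d _ <|
      (one_kronecker_P0_isHermitian d d).mul_vecMulVec_star_mul (one_kronecker_P0_mulVec_GHZ3 d)⟩

/-- `I_D ⊗ S` leaves invariant every matrix supported on the subspace
`I_D ⊗ P₀`; in particular the GHZ state is preserved. -/
theorem stmt_14 (d D : ℕ) [NeZero d] [NeZero D] :
    (∀ ρ : Matrix (Fin D × (Fin d × Fin d)) (Fin D × (Fin d × Fin d)) ℂ,
      ((1 : Matrix (Fin D) (Fin D) ℂ) ⊗ₖ P0 d) * ρ * ((1 : Matrix (Fin D) (Fin D) ℂ) ⊗ₖ P0 d)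
          = ρ →
        ∑ idx : Fin d → Fin d,
          ((1 : Matrix (Fin D) (Fin D) ℂ) ⊗ₖ Sop d idx) * ρ *
            ((1 : Matrix (Fin D) (Fin D) ℂ) ⊗ₖ Sop d idx)ᴴ = ρ) ∧
    (∑ idx : Fin d → Fin d,
        ((1 : Matrix (Fin d) (Fin d) ℂ) ⊗ₖ Sop d idx) *
            vecMulVec (GHZ3 d) (star (GHZ3 d)) *
          ((1 : Matrix (Fin d) (Fin d) ℂ) ⊗ₖ Sop d idx)ᴴ =
      vecMulVec (GHZ3 d) (star (GHZ3 d))) :=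
  stmt_14_general d D
end

section
/- (Core of Lemma 8 of the Supplemental Material.) Let d ≥ 2, D ≥ 1, let ψ_0,…,ψ_{d−1} ∈ ℂ^D be orthonormal, and set ψ := (1/√d) Σ_{j∈Fin d} ψ_j ⊗ e_j ⊗ e_j ∈ ℂ^D ⊗ ℂ^d ⊗ ℂ^d. Let ρ* be a density matrix on ℂ^D ⊗ ℂ^d ⊗ ℂ^d. If Σ_{(i_0,…,i_{d−1})∈(Fin d)^d} (I_D ⊗ S_{i_0,…,i_{d−1}}) ρ* (I_D ⊗ S_{i_0,…,i_{d−1}})† = ψψ†, where the controlled-order Kraus operators S act on the last two tensor factors, then ρ* = ψψ†. -/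
open Matrix Kronecker BigOperators Complex
open scoped ComplexOrder

/-- The vector `(1/√d) Σ_j ψ_j ⊗ e_j ⊗ e_j ∈ ℂ^D ⊗ ℂ^d ⊗ ℂ^d`. -/
noncomputable def GHZpsi (d D : ℕ) (ψv : Fin d → Fin D → ℂ) :
    Fin D × (Fin d × Fin d) → ℂ :=
  fun p => ((1 / Real.sqrt d : ℝ) : ℂ) * (if p.2.1 = p.2.2 then ψv p.2.1 p.1 else 0)

/-!
Each Kraus term `K ρ* K†` is a positive summand of `ψψ†`, so `K ρ* K† ≤ ψψ†`, and therefore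
`K ρ* K†` kills every vector orthogonal to `ψ`. For `v ≠ j` the index map `k ↦ k + 1`, modified
to send `j - 1 ↦ v`, has Kraus operator `I ⊗ |j⟩⟨v| ⊗ |j⟩⟨j|`; its term lives in the `(j, j)`
block while `ψ` has weight in the `(v, v)` block, so the term vanishes, and with it the diagonal
entries of `ρ*` at `(x, v, j)`. Hence `ρ*` is supported where the two control registers agree, so
it is fixed by the Kraus term of `k ↦ k + 1`, the projector `P0` onto that subspace. Thus
`ρ* ≤ ψψ†`, and since both have trace one they are equal.
-/

open Fin.NatCast
open Fin.CommRing
open scoped MatrixOrder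

namespace Matrix

section
variable {n α : Type*} [Fintype n] [Semiring α]

theorem list_prod_map_range_single_one [DecidableEq n] (a b : ℕ → n) (m : ℕ) :
    ((List.range (m + 1)).map fun k => single (a k) (b k) (1 : α)).prod =
      if ∀ k < m, b k = a (k + 1) then single (a 0) (b m) 1 else 0 := by
  induction m with
  | zero => simp
  | succ m ih =>
    rw [List.range_succ, List.map_append, List.prod_append, ih]
    simp only [List.map_singleton, List.prod_singleton, Nat.forall_lt_succ_right]
    by_cases hlink : b m = a (m + 1) <;> simp [hlink]

theorem mul_mul_conjTranspose_apply_of_row_eq_zero [StarRing α] {M : Matrix n n α} {q : n}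
    (hq : M q = 0) (ρ : Matrix n n α) (r : n) : (M * ρ * Mᴴ) r q = 0 := by
  simp [mul_apply, hq]

theorem mul_mul_conjTranspose_apply_of_row_eq_single [StarRing α] [DecidableEq n]
    {M : Matrix n n α} {p s : n} (hp : M p = Pi.single s 1) (ρ : Matrix n n α) :
    (M * ρ * Mᴴ) p p = ρ s s := by
  simp [mul_apply, hp, Pi.single_apply, apply_ite star]

end

variable {𝕜 n : Type*} [RCLike 𝕜] [Fintype n]

theorem PosSemidef.apply_eq_zero_of_diag_eq_zero [DecidableEq n] {A : Matrix n n 𝕜}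
    (hA : A.PosSemidef) {p : n} (hp : A p p = 0) (r : n) : A r p = 0 := by
  have h := (hA.dotProduct_mulVec_zero_iff (Pi.single p 1)).mp (by simp [hp])
  simpa using congrFun h r

theorem mulVec_eq_zero_of_le_vecMulVec {A : Matrix n n 𝕜} {ψ x : n → 𝕜} (hA : 0 ≤ A)
    (hle : A ≤ vecMulVec ψ (star ψ)) (hx : star ψ ⬝ᵥ x = 0) : A *ᵥ x = 0 := by
  rw [← hA.posSemidef.dotProduct_mulVec_zero_iff]
  have hψ : star x ⬝ᵥ vecMulVec ψ (star ψ) *ᵥ x = 0 := by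
    simp [vecMulVec_mulVec, hx]
  have h := (le_iff.mp hle).dotProduct_mulVec_nonneg x
  rw [sub_mulVec, dotProduct_sub, hψ, zero_sub, neg_nonneg] at h
  exact le_antisymm h (hA.posSemidef.dotProduct_mulVec_nonneg x)

theorem eq_zero_of_le_vecMulVec_of_col_eq_zero [DecidableEq n] {A : Matrix n n 𝕜} {ψ : n → 𝕜}
    {q : n} (hA : 0 ≤ A) (hle : A ≤ vecMulVec ψ (star ψ)) (hψq : ψ q ≠ 0)
    (hAq : ∀ r, A r q = 0) : A = 0 := by
  ext r p
  set x : n → 𝕜 := Pi.single p (star (ψ q)) - Pi.single q (star (ψ p))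
  have hx : star ψ ⬝ᵥ x = 0 := by
    simp [x, dotProduct_sub, mul_comm]
  simpa [x, mulVec_sub, hAq, hψq] using congrFun (mulVec_eq_zero_of_le_vecMulVec hA hle hx) r

end Matrix

theorem Fin.natCast_eq_neg_one (n : ℕ) : ((n : ℕ) : Fin (n + 1)) = -1 :=
  eq_neg_of_add_eq_zero_left (by exact_mod_cast Fin.natCast_self (n + 1))

theorem Fin.natCast_add_one_ne_zero {n k : ℕ} (hk : k < n) :
    ((k : ℕ) : Fin (n + 1)) + 1 ≠ 0 := by
  rw [← Nat.cast_succ, Ne, Fin.natCast_eq_zero]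
  exact fun h => by have := Nat.le_of_dvd k.succ_pos h; omega

theorem Sop_eq_sum (n : ℕ) (g : Fin (n + 1) → Fin (n + 1)) :
    Sop (n + 1) g = ∑ j,
      (if ∀ k < n, g (j + k) = j + k + 1 then Emat (n + 1) j (g (j + n)) else 0) ⊗ₖ
        Emat (n + 1) j j := by
  refine Finset.sum_congr rfl fun j _ => ?_
  have hrange : (List.finRange (n + 1)).map (fun k => Emat (n + 1) (j + k) (g (j + k))) =
      (List.range (n + 1)).map (fun k : ℕ => single (j + k) (g (j + k)) 1) := by
    rw [← List.map_coe_finRange_eq_range, List.map_map]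
    exact List.map_congr_left fun k _ => by simp [Emat]
  rw [hrange, list_prod_map_range_single_one]
  simp [Emat, Nat.cast_succ, add_assoc]

theorem Sop_add_one_eq_P0 (d : ℕ) [NeZero d] : Sop d (· + 1) = P0 d := by
  obtain ⟨n, rfl⟩ := Nat.exists_eq_succ_of_ne_zero (NeZero.ne d)
  rw [Sop_eq_sum]
  refine Finset.sum_congr rfl fun j _ => ?_
  rw [if_pos fun k _ => rfl, add_assoc, Fin.natCast_eq_neg_one, neg_add_cancel, add_zero]

theorem Sop_update_add_one {d : ℕ} [NeZero d] {j v : Fin d} (hv : v ≠ j) :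
    Sop d (Function.update (· + 1) (j - 1) v) = Emat d j v ⊗ₖ Emat d j j := by
  obtain ⟨n, rfl⟩ := Nat.exists_eq_succ_of_ne_zero (NeZero.ne d)
  rw [Sop_eq_sum, Finset.sum_eq_single j]
  · rw [if_pos, Fin.natCast_eq_neg_one, ← sub_eq_add_neg, Function.update_self]
    intro k hk
    rw [Function.update_of_ne, add_assoc]
    intro h
    exact Fin.natCast_add_one_ne_zero hk (by linear_combination h)
  · intro i _ hi
    rw [if_neg, zero_kronecker]
    intro hchain
    set k := (j - 1 - i).val
    have hk : ((k : ℕ) : Fin (n + 1)) = j - 1 - i := Fin.cast_val_eq_self _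
    have hkn : k < n := by
      refine lt_of_le_of_ne (Nat.lt_succ_iff.mp (j - 1 - i).isLt) fun hkn => hi ?_
      rw [hkn, Fin.natCast_eq_neg_one] at hk
      linear_combination hk
    have := hchain k hkn
    rw [hk, show i + (j - 1 - i) = j - 1 by ring, Function.update_self] at this
    exact hv (by linear_combination this)
  · simp

theorem one_kronecker_P0_eq_diagonal (d D : ℕ) :
    (1 : Matrix (Fin D) (Fin D) ℂ) ⊗ₖ P0 d =
      diagonal fun p => if p.2.1 = p.2.2 then 1 else 0 := by
  ext ⟨x, a, b⟩ ⟨y, c, e⟩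
  simp only [P0, Emat, kroneckerMap_apply, Matrix.sum_apply, single_apply, diagonal_apply,
    one_apply, ite_and]
  aesop

theorem GHZpsi_dotProduct_star {d D : ℕ} [NeZero d] {ψv : Fin d → Fin D → ℂ}
    (hψv : ∀ j, star (ψv j) ⬝ᵥ ψv j = 1) : GHZpsi d D ψv ⬝ᵥ star (GHZpsi d D ψv) = 1 := by
  have hsq : ((1 / Real.sqrt d : ℝ) : ℂ) * ((1 / Real.sqrt d : ℝ) : ℂ) = (d : ℂ)⁻¹ := by
    rw [← Complex.ofReal_mul, div_mul_div_comm, one_mul, Real.mul_self_sqrt d.cast_nonneg]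
    push_cast; ring
  calc GHZpsi d D ψv ⬝ᵥ star (GHZpsi d D ψv)
      = ∑ j : Fin d, (d : ℂ)⁻¹ * (star (ψv j) ⬝ᵥ ψv j) := by
        simp only [dotProduct, GHZpsi, Fintype.sum_prod_type, Pi.star_apply, star_mul',
          apply_ite star, star_zero, mul_ite, ite_mul, mul_zero, Finset.sum_ite_eq,
          Finset.mem_univ, if_true, Finset.mul_sum, Complex.star_def, Complex.conj_ofReal]
        rw [Finset.sum_comm]
        refine Finset.sum_congr rfl fun j _ => Finset.sum_congr rfl fun x _ => ?_
        rw [← hsq]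
        ring
    _ = 1 := by simp [hψv, NeZero.ne d]

theorem apply_self_eq_zero_of_kraus_le {d D : ℕ} [NeZero d] {ψv : Fin d → Fin D → ℂ}
    (hψv : ∀ j, ψv j ≠ 0) {ρ : Matrix (Fin D × (Fin d × Fin d)) (Fin D × (Fin d × Fin d)) ℂ}
    (hρ : ρ.PosSemidef)
    (hle : ∀ idx, ((1 : Matrix (Fin D) (Fin D) ℂ) ⊗ₖ Sop d idx) * ρ *
      ((1 : Matrix (Fin D) (Fin D) ℂ) ⊗ₖ Sop d idx)ᴴ ≤
        vecMulVec (GHZpsi d D ψv) (star (GHZpsi d D ψv)))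
    {p : Fin D × (Fin d × Fin d)} (hp : p.2.1 ≠ p.2.2) : ρ p p = 0 := by
  obtain ⟨x, v, j⟩ := p
  set M := (1 : Matrix (Fin D) (Fin D) ℂ) ⊗ₖ (Emat d j v ⊗ₖ Emat d j j)
  have hMρ : M * ρ * Mᴴ ≤ vecMulVec (GHZpsi d D ψv) (star (GHZpsi d D ψv)) := by
    simpa only [Sop_update_add_one hp] using hle (Function.update (· + 1) (j - 1) v)
  obtain ⟨y, hy⟩ := Function.ne_iff.mp (hψv v)
  have hψ : GHZpsi d D ψv (y, (v, v)) ≠ 0 := by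
    simpa [GHZpsi, NeZero.ne d] using hy
  have hrow_vv : M (y, (v, v)) = 0 := by
    ext ⟨y', c, e⟩
    simp [M, Emat, Ne.symm hp]
  have hrow_jj : M (x, (j, j)) = Pi.single (x, (v, j)) 1 := by
    ext ⟨y', c, e⟩
    simp only [M, Emat, kroneckerMap_apply, single_apply, one_apply, Pi.single_apply,
      Prod.mk.injEq]
    aesop
  have hzero := eq_zero_of_le_vecMulVec_of_col_eq_zero (hρ.mul_mul_conjTranspose_same M).nonneg
    hMρ hψ (mul_mul_conjTranspose_apply_of_row_eq_zero hrow_vv ρ)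
  simpa [hzero] using (mul_mul_conjTranspose_apply_of_row_eq_single hrow_jj ρ).symm

theorem one_kronecker_P0_conj_eq_self {d D : ℕ}
    {ρ : Matrix (Fin D × (Fin d × Fin d)) (Fin D × (Fin d × Fin d)) ℂ} (hρ : ρ.PosSemidef)
    (hoff : ∀ p : Fin D × (Fin d × Fin d), p.2.1 ≠ p.2.2 → ρ p p = 0) :
    ((1 : Matrix (Fin D) (Fin D) ℂ) ⊗ₖ P0 d) * ρ *
      ((1 : Matrix (Fin D) (Fin D) ℂ) ⊗ₖ P0 d)ᴴ = ρ := by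
  rw [one_kronecker_P0_eq_diagonal, diagonal_conjTranspose]
  ext p q
  rw [mul_diagonal, diagonal_mul]
  by_cases hp : p.2.1 = p.2.2
  · by_cases hq : q.2.1 = q.2.2
    · simp [hp, hq]
    · simp [hρ.apply_eq_zero_of_diag_eq_zero (hoff q hq) p]
  · have hpq : ρ p q = 0 := by
      rw [← hρ.isHermitian.apply, hρ.apply_eq_zero_of_diag_eq_zero (hoff p hp) q, star_zero]
    simp [hpq]

theorem stmt_17_general (d D : ℕ) [NeZero d]
    (ψv : Fin d → Fin D → ℂ)
    (hψv : ∀ j j' : Fin d, star (ψv j) ⬝ᵥ ψv j' = if j = j' then 1 else 0)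
    (ρstar : Matrix (Fin D × (Fin d × Fin d)) (Fin D × (Fin d × Fin d)) ℂ)
    (hpos : ρstar.PosSemidef) (htr : ρstar.trace = 1)
    (hch : ∑ idx : Fin d → Fin d,
        ((1 : Matrix (Fin D) (Fin D) ℂ) ⊗ₖ Sop d idx) * ρstar *
          ((1 : Matrix (Fin D) (Fin D) ℂ) ⊗ₖ Sop d idx)ᴴ =
      vecMulVec (GHZpsi d D ψv) (star (GHZpsi d D ψv))) :
    ρstar = vecMulVec (GHZpsi d D ψv) (star (GHZpsi d D ψv)) := by
  set P := vecMulVec (GHZpsi d D ψv) (star (GHZpsi d D ψv))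
  have hnorm : ∀ j, star (ψv j) ⬝ᵥ ψv j = 1 := fun j => by simpa using hψv j j
  have hne : ∀ j, ψv j ≠ 0 := fun j h => by simpa [h] using hnorm j
  have hle : ∀ idx, ((1 : Matrix (Fin D) (Fin D) ℂ) ⊗ₖ Sop d idx) * ρstar *
      ((1 : Matrix (Fin D) (Fin D) ℂ) ⊗ₖ Sop d idx)ᴴ ≤ P := fun idx =>
    hch ▸ Finset.single_le_sum (fun i _ => (hpos.mul_mul_conjTranspose_same _).nonneg)
      (Finset.mem_univ idx)
  have hρle : ρstar ≤ P := by
    have := hle (· + 1)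
    rwa [Sop_add_one_eq_P0, one_kronecker_P0_conj_eq_self hpos
      fun p hp => apply_self_eq_zero_of_kraus_le hne hpos hle hp] at this
  have htrace : (P - ρstar).trace = 0 := by
    rw [trace_sub, trace_vecMulVec, GHZpsi_dotProduct_star hnorm, htr, sub_self]
  exact (sub_eq_zero.mp ((le_iff.mp hρle).trace_eq_zero_iff.mp htrace)).symm

/-- core of Lemma 8: if the controlled-order channel applied to the last two
factors of `ρ*` (with identity on the first factor) yields the pure state `ψψ†` with
`ψ = (1/√d) Σ_j ψ_j ⊗ e_j ⊗ e_j`, `ψ_j` orthonormal, then `ρ* = ψψ†`. -/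
theorem stmt_17 (d D : ℕ) [NeZero d] [NeZero D] (hd : 2 ≤ d)
    (ψv : Fin d → Fin D → ℂ)
    (hψv : ∀ j j' : Fin d, star (ψv j) ⬝ᵥ ψv j' = if j = j' then 1 else 0)
    (ρstar : Matrix (Fin D × (Fin d × Fin d)) (Fin D × (Fin d × Fin d)) ℂ)
    (hpos : ρstar.PosSemidef) (htr : ρstar.trace = 1)
    (hch : ∑ idx : Fin d → Fin d,
        ((1 : Matrix (Fin D) (Fin D) ℂ) ⊗ₖ Sop d idx) * ρstar *
          ((1 : Matrix (Fin D) (Fin D) ℂ) ⊗ₖ Sop d idx)ᴴ =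
      vecMulVec (GHZpsi d D ψv) (star (GHZpsi d D ψv))) :
    ρstar = vecMulVec (GHZpsi d D ψv) (star (GHZpsi d D ψv)) :=
  stmt_17_general d D ψv hψv ρstar hpos htr hch
end

section
/- (Lemma 10 of the Supplemental Material and the if-part of Theorem 3.) Let d ≥ 1 and N ≥ 1. For index arrays (i_{k,n}) ∈ Fin d, k ∈ Fin d, n ∈ Fin N, define the N-line controlled-order Kraus operator 𝒦_{(i_{k,n})} := Σ_{j∈Fin d} (⨂_{n∈Fin N} E^{(j)}_{i_{j,n}} · E^{(j⊕1)}_{i_{j⊕1,n}} · ⋯ · E^{(j⊕(d−1))}_{i_{j⊕(d−1),n}}) ⊗ |j⟩⟨j|, a matrix on (ℂ^d)^{⊗N} ⊗ ℂ^d, and set P_0^N := Σ_{j∈Fin d} (|j⟩⟨j|)^{⊗(N+1)}. Then: (a) for every matrix ρ on (ℂ^d)^{⊗(N+1)}, Σ_{(i_{k,n})} 𝒦 ρ 𝒦† = P_0^N ρ P_0^N + Σ_{j∈Fin d} Σ_{y∈(Fin d)^N, y≠(j,…,j)} ρ((y,j),(y,j)) · (|j⟩⟨j|)^{⊗(N+1)};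 (b) consequently, for every matrix ρ on ℂ^D ⊗ (ℂ^d)^{⊗(N+1)} with (I_D ⊗ P_0^N) ρ (I_D ⊗ P_0^N) = ρ, one has Σ_{(i_{k,n})} (I_D ⊗ 𝒦) ρ (I_D ⊗ 𝒦)† = ρ; in particular, for D = d the (N+2)-partite GHZ state GHZ_{N+2} := (1/√d) Σ_{j∈Fin d} e_j^{⊗(N+2)} satisfies (I_d ⊗ 𝒦-channel)(GHZ_{N+2} GHZ_{N+2}†) = GHZ_{N+2} GHZ_{N+2}†. -/
open Matrix Kronecker BigOperators Complex

/-- The `N`-fold Kronecker product `⨂_n M_n` on `(ℂ^d)^{⊗N}`. -/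
noncomputable def kronPow (d N : ℕ) (M : Fin N → Matrix (Fin d) (Fin d) ℂ) :
    Matrix (Fin N → Fin d) (Fin N → Fin d) ℂ :=
  Matrix.of fun y y' => ∏ n : Fin N, M n (y n) (y' n)

/-- The `N`-line controlled-order Kraus operator `𝒦_{(i_{k,n})}`. -/
noncomputable def Kop (d N : ℕ) [NeZero d] (idx : Fin d → Fin N → Fin d) :
    Matrix ((Fin N → Fin d) × Fin d) ((Fin N → Fin d) × Fin d) ℂ :=
  ∑ j : Fin d,
    (kronPow d N (fun n =>
      (((List.finRange d).map (fun k => Emat d (j + k) (idx (j + k) n))).prod))) ⊗ₖ Emat d j j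

/-- `P₀^N := Σ_j (|j⟩⟨j|)^{⊗(N+1)}`. -/
noncomputable def P0N (d N : ℕ) :
    Matrix ((Fin N → Fin d) × Fin d) ((Fin N → Fin d) × Fin d) ℂ :=
  ∑ j : Fin d, kronPow d N (fun _ => Emat d j j) ⊗ₖ Emat d j j

/-- The `(N+2)`-partite GHZ state `(1/√d) Σ_j e_j^{⊗(N+2)}`. -/
noncomputable def GHZN (d N : ℕ) : Fin d × ((Fin N → Fin d) × Fin d) → ℂ :=
  fun p => if (∀ n : Fin N, p.2.1 n = p.1) ∧ p.2.2 = p.1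
    then ((1 / Real.sqrt d : ℝ) : ℂ) else 0

/-!
A factor `E^{(j)}_{i_{j,n}} ⋯ E^{(j⊕(d-1))}_{i_{j⊕(d-1),n}}` of `𝒦` is a chain of matrix units:
it vanishes unless `i_{m,n} = m ⊕ 1` for every `m ≠ j ⊖ 1`, and then equals `|j⟩⟨i_{j⊖1,n}|`.
So `𝒦` is the sum of the matrix units `|j…j, j⟩⟨i_{j⊖1}, j|` over the controls `j` for which the
index array is the cyclic shift off the row `j ⊖ 1`. In `Σ 𝒦 ρ 𝒦†`, a diagonal block `j = j'`
leaves the row `j ⊖ 1` free and so collects the whole trace of the `j`-th control block of `ρ`,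
while an off-diagonal block `j ≠ j'` forces the array to be the full shift and keeps
`ρ((j…j, j), (j'…j', j'))`. A state supported on `P₀^N` has no diagonal weight off the GHZ
indices, hence is fixed.
-/

theorem Matrix.prod_map_finRange_single {R m : Type*} [Semiring R] [Fintype m] [DecidableEq m]
    {n : ℕ} (g h : Fin (n + 1) → m) :
    ((List.finRange (n + 1)).map fun k => single (g k) (h k) (1 : R)).prod =
      if ∀ k : Fin n, h k.castSucc = g k.succ then single (g 0) (h (Fin.last n)) 1 else 0 := by
  induction n with
  | zero => simp [List.finRange_succ]
  | succ n ih =>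
    have htail := ih (fun k => g k.succ) (fun k => h k.succ)
    simp only [Fin.succ_last, Fin.succ_zero_eq_one] at htail
    rw [List.finRange_succ, List.map_cons, List.prod_cons, List.map_map, Function.comp_def, htail]
    by_cases hchain : ∀ k : Fin n, h k.castSucc.succ = g k.succ.succ <;>
      by_cases h0 : h 0 = g 1 <;> simp [Fin.forall_fin_succ, h0, hchain]

theorem Matrix.prod_map_finRange_single_cycle {R : Type*} [Semiring R] {d : ℕ} [NeZero d]
    (j : Fin d) (f : Fin d → Fin d) :
    ((List.finRange d).map fun k => single (j + k) (f (j + k)) (1 : R)).prod =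
      if ∀ m, m ≠ j - 1 → f m = m + 1 then single j (f (j - 1)) 1 else 0 := by
  obtain ⟨n, rfl⟩ := Nat.exists_eq_succ_of_ne_zero (NeZero.ne d)
  have hlast : j + Fin.last n = j - 1 := by
    rw [sub_eq_add_neg, ← Fin.neg_last, neg_neg]
  have hchain : (∀ k : Fin n, f (j + k.castSucc) = j + k.succ) ↔
      ∀ m, m ≠ j - 1 → f m = m + 1 := by
    simp only [← Fin.coeSucc_eq_succ, ← add_assoc]
    refine ⟨fun H m hm => ?_, fun H k => H _ ?_⟩
    · obtain ⟨k, hk⟩ := Fin.exists_castSucc_eq.mpr (show m - j ≠ Fin.last n by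
        rintro hmj; exact hm (by rw [← hlast, ← hmj, add_sub_cancel]))
      simpa [hk] using H k
    · rw [← hlast]; exact fun hk => Fin.castSucc_ne_last k (add_left_cancel hk)
  rw [prod_map_finRange_single, add_zero, hlast, if_congr hchain rfl rfl]

theorem Matrix.single_sum {ι m n α : Type*} [DecidableEq m] [DecidableEq n] [AddCommMonoid α]
    (i : m) (j : n) (s : Finset ι) (f : ι → α) :
    single i j (∑ x ∈ s, f x) = ∑ x ∈ s, single i j (f x) :=
  map_sum (singleAddMonoidHom i j) f s

theorem Matrix.submatrix_one_kronecker_mul_mul_one_kronecker {R l m n o p : Type*}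
    [CommSemiring R] [Fintype l] [DecidableEq l] [Fintype n] [Fintype o]
    (A : Matrix m n R) (ρ : Matrix (l × n) (l × o) R) (B : Matrix o p R) (a b : l) :
    (((1 : Matrix l l R) ⊗ₖ A) * ρ * ((1 : Matrix l l R) ⊗ₖ B)).submatrix (Prod.mk a) (Prod.mk b) =
      A * ρ.submatrix (Prod.mk a) (Prod.mk b) * B := by
  ext i j
  simp [mul_apply, Fintype.sum_prod_type, one_apply, Finset.sum_mul]

theorem Matrix.submatrix_sum {ι l m n o α : Type*} [AddCommMonoid α] (s : Finset ι)
    (M : ι → Matrix m n α) (r : l → m) (c : o → n) :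
    (∑ i ∈ s, M i).submatrix r c = ∑ i ∈ s, (M i).submatrix r c := by
  ext
  simp [Matrix.sum_apply]

theorem Matrix.ext_of_submatrix_prodMk {R l m n : Type*} {M M' : Matrix (l × m) (l × n) R}
    (h : ∀ a b, M.submatrix (Prod.mk a) (Prod.mk b) = M'.submatrix (Prod.mk a) (Prod.mk b)) :
    M = M' := by
  ext ⟨a, i⟩ ⟨b, j⟩
  exact congrFun₂ (h a b) i j

section ControlledOrder

variable {d N : ℕ}

/-- The index of `e_j^{⊗(N+1)}`. -/
def ghzIndex (j : Fin d) : (Fin N → Fin d) × Fin d := (fun _ => j, j)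

theorem ghzIndex_injective : Function.Injective (ghzIndex (d := d) (N := N)) :=
  fun _ _ h => (Prod.ext_iff.mp h).2

theorem kronPow_single (a b : Fin N → Fin d) :
    kronPow d N (fun n => single (a n) (b n) 1) = single a b 1 := by
  ext y y'
  simp [kronPow, single_apply, Finset.prod_boole, funext_iff, forall_and]

theorem kronPow_ite_zero (p : Fin N → Prop) [DecidablePred p]
    (M : Fin N → Matrix (Fin d) (Fin d) ℂ) :
    kronPow d N (fun n => if p n then M n else 0) = if ∀ n, p n then kronPow d N M else 0 := by
  ext y y'
  split_ifs with h
  · simp [kronPow, h]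
  · obtain ⟨n, hn⟩ := not_forall.mp h
    exact Finset.prod_eq_zero (Finset.mem_univ n) (by simp [hn])

theorem kronPow_Emat_kronecker_Emat (j : Fin d) :
    kronPow d N (fun _ => Emat d j j) ⊗ₖ Emat d j j = single (ghzIndex j) (ghzIndex j) 1 := by
  simp only [Emat, kronPow_single (fun _ => j) (fun _ => j), single_kronecker_single, mul_one]
  rfl

theorem P0N_eq_sum_single :
    P0N d N = ∑ j : Fin d, single (ghzIndex j) (ghzIndex j) 1 := by
  simp only [P0N, kronPow_Emat_kronecker_Emat]

theorem P0N_mul_mul_P0N (ρ : Matrix ((Fin N → Fin d) × Fin d) ((Fin N → Fin d) × Fin d) ℂ) :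
    P0N d N * ρ * P0N d N = ∑ j : Fin d, ∑ j' : Fin d,
      single (ghzIndex j) (ghzIndex j') (ρ (ghzIndex j) (ghzIndex j')) := by
  simp only [P0N_eq_sum_single, Finset.sum_mul, Finset.mul_sum, single_mul_mul_single, one_mul,
    mul_one]
  exact Finset.sum_comm

theorem P0N_mul_single_mul_P0N (a b : Fin d) (x : ℂ) :
    P0N d N * single (ghzIndex a) (ghzIndex b) x * P0N d N =
      single (ghzIndex a) (ghzIndex b) x := by
  rw [P0N_mul_mul_P0N]
  simp [single_apply, ghzIndex_injective.eq_iff, ite_and, apply_ite (single _ _)]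

theorem apply_self_eq_zero_of_P0N_mul_mul_P0N
    {X : Matrix ((Fin N → Fin d) × Fin d) ((Fin N → Fin d) × Fin d) ℂ}
    (hX : P0N d N * X * P0N d N = X) {y : Fin N → Fin d} {j : Fin d} (hy : y ≠ fun _ => j) :
    X (y, j) (y, j) = 0 := by
  rw [← hX, P0N_mul_mul_P0N]
  simp only [Matrix.sum_apply]
  refine Finset.sum_eq_zero fun j₁ _ => Finset.sum_eq_zero fun j₂ _ => ?_
  rw [single_apply, if_neg]
  rintro ⟨h, -⟩
  obtain ⟨rfl, rfl⟩ := Prod.ext_iff.mp h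
  exact hy rfl

theorem GHZN_apply (a : Fin d) (p : (Fin N → Fin d) × Fin d) :
    GHZN d N (a, p) = if p = ghzIndex a then ((1 / Real.sqrt d : ℝ) : ℂ) else 0 := by
  simp [GHZN, ghzIndex, Prod.ext_iff, funext_iff]

theorem submatrix_vecMulVec_GHZN (a b : Fin d) :
    (vecMulVec (GHZN d N) (star (GHZN d N))).submatrix (Prod.mk a) (Prod.mk b) =
      single (ghzIndex a) (ghzIndex b) (1 / (d : ℂ)) := by
  ext p q
  have hsqrt : ((Real.sqrt d : ℝ) : ℂ)⁻¹ * ((Real.sqrt d : ℝ) : ℂ)⁻¹ = (d : ℂ)⁻¹ := by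
    rw [← mul_inv, ← Complex.ofReal_mul, Real.mul_self_sqrt (Nat.cast_nonneg d),
      Complex.ofReal_natCast]
  by_cases hq : q = ghzIndex b <;>
    simp [vecMulVec_apply, GHZN_apply, single_apply, eq_comm, hq, hsqrt]

theorem one_kronecker_P0N_mul_vecMulVec_GHZN_mul :
    ((1 : Matrix (Fin d) (Fin d) ℂ) ⊗ₖ P0N d N) * vecMulVec (GHZN d N) (star (GHZN d N)) *
      ((1 : Matrix (Fin d) (Fin d) ℂ) ⊗ₖ P0N d N) = vecMulVec (GHZN d N) (star (GHZN d N)) :=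
  ext_of_submatrix_prodMk fun a b => by
    rw [submatrix_one_kronecker_mul_mul_one_kronecker, submatrix_vecMulVec_GHZN,
      P0N_mul_single_mul_P0N]

section Shift

variable [NeZero d]

def IsShiftExcept (k : Fin d) (idx : Fin d → Fin N → Fin d) : Prop :=
  ∀ m, m ≠ k → idx m = fun _ => m + 1

instance (k : Fin d) : DecidablePred (IsShiftExcept (N := N) k) :=
  fun _ => by unfold IsShiftExcept; infer_instance

theorem Kop_eq_sum_single (idx : Fin d → Fin N → Fin d) :
    Kop d N idx = ∑ j : Fin d,
      if IsShiftExcept (j - 1) idx then single (ghzIndex j) (idx (j - 1), j) 1 else 0 := by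
  refine Finset.sum_congr rfl fun j _ => ?_
  have hline (n : Fin N) :
      ((List.finRange d).map fun k => Emat d (j + k) (idx (j + k) n)).prod =
        if ∀ m, m ≠ j - 1 → idx m n = m + 1 then single j (idx (j - 1) n) 1 else 0 :=
    prod_map_finRange_single_cycle j (idx · n)
  have hshift : (∀ n, ∀ m, m ≠ j - 1 → idx m n = m + 1) ↔ IsShiftExcept (j - 1) idx := by
    simp only [IsShiftExcept, funext_iff]
    exact forall_comm.trans (forall_congr' fun m => forall_comm)
  simp only [hline, kronPow_ite_zero, kronPow_single, if_congr hshift rfl rfl]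
  split_ifs
  · rw [Emat, single_kronecker_single, mul_one]; rfl
  · rw [zero_kronecker]

theorem Kop_mul_mul_conjTranspose (idx : Fin d → Fin N → Fin d)
    (ρ : Matrix ((Fin N → Fin d) × Fin d) ((Fin N → Fin d) × Fin d) ℂ) :
    Kop d N idx * ρ * (Kop d N idx)ᴴ = ∑ j : Fin d, ∑ j' : Fin d,
      single (ghzIndex j) (ghzIndex j')
        (if IsShiftExcept (j - 1) idx ∧ IsShiftExcept (j' - 1) idx
          then ρ (idx (j - 1), j) (idx (j' - 1), j') else 0) := by
  simp only [Kop_eq_sum_single, conjTranspose_sum, Finset.sum_mul, Finset.mul_sum]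
  rw [Finset.sum_comm]
  refine Finset.sum_congr rfl fun j _ => Finset.sum_congr rfl fun j' _ => ?_
  split_ifs <;> simp_all

theorem sum_ite_isShiftExcept {M : Type*} [AddCommMonoid M] (k : Fin d)
    (F : (Fin N → Fin d) → M) :
    ∑ idx : Fin d → Fin N → Fin d, (if IsShiftExcept k idx then F (idx k) else 0) =
      ∑ g, F g := by
  rw [Fintype.sum_equiv (Equiv.piSplitAt k _) _
    (fun p => if p.2 = (fun m _ => m.1 + 1) then F p.1 else 0)]
  · simp [Fintype.sum_prod_type]
  · intro idx
    simp [IsShiftExcept, funext_iff]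

theorem isShiftExcept_and_isShiftExcept_iff {k k' : Fin d} (hk : k ≠ k')
    (idx : Fin d → Fin N → Fin d) :
    IsShiftExcept k idx ∧ IsShiftExcept k' idx ↔ idx = fun m _ => m + 1 := by
  refine ⟨fun ⟨h, h'⟩ => funext fun m => ?_, ?_⟩
  · by_cases hm : m = k
    · exact h' m (hm ▸ hk)
    · exact h m hm
  · rintro rfl
    exact ⟨fun _ _ => rfl, fun _ _ => rfl⟩

theorem sum_Kop_mul_mul_conjTranspose_coeff
    (ρ : Matrix ((Fin N → Fin d) × Fin d) ((Fin N → Fin d) × Fin d) ℂ) (j j' : Fin d) :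
    ∑ idx : Fin d → Fin N → Fin d,
        (if IsShiftExcept (j - 1) idx ∧ IsShiftExcept (j' - 1) idx
          then ρ (idx (j - 1), j) (idx (j' - 1), j') else 0) =
      if j = j' then ∑ y, ρ (y, j) (y, j) else ρ (ghzIndex j) (ghzIndex j') := by
  split_ifs with hj
  · subst hj
    simp only [and_self]
    exact sum_ite_isShiftExcept (j - 1) fun y => ρ (y, j) (y, j)
  · have hk : j - 1 ≠ j' - 1 := fun h => hj (sub_left_inj.mp h)
    simp [isShiftExcept_and_isShiftExcept_iff hk, ghzIndex]

theorem sum_Kop_mul_mul_conjTranspose_eq_sum_single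
    (ρ : Matrix ((Fin N → Fin d) × Fin d) ((Fin N → Fin d) × Fin d) ℂ) :
    ∑ idx : Fin d → Fin N → Fin d, Kop d N idx * ρ * (Kop d N idx)ᴴ =
      ∑ j : Fin d, ∑ j' : Fin d, single (ghzIndex j) (ghzIndex j')
        (if j = j' then ∑ y, ρ (y, j) (y, j) else ρ (ghzIndex j) (ghzIndex j')) := by
  simp only [Kop_mul_mul_conjTranspose, ← sum_Kop_mul_mul_conjTranspose_coeff]
  rw [Finset.sum_comm]
  refine Finset.sum_congr rfl fun j _ => ?_
  rw [Finset.sum_comm]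
  exact Finset.sum_congr rfl fun j' _ => (single_sum _ _ _ _).symm

theorem sum_Kop_mul_mul_conjTranspose_eq
    (ρ : Matrix ((Fin N → Fin d) × Fin d) ((Fin N → Fin d) × Fin d) ℂ) :
    ∑ idx : Fin d → Fin N → Fin d, Kop d N idx * ρ * (Kop d N idx)ᴴ =
      P0N d N * ρ * P0N d N +
        ∑ j : Fin d,
          ∑ y ∈ Finset.univ.filter (fun y : Fin N → Fin d => y ≠ fun _ => j),
            ρ (y, j) (y, j) • (kronPow d N (fun _ => Emat d j j) ⊗ₖ Emat d j j) := by
  have hcoeff (j j' : Fin d) :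
      (if j = j' then ∑ y, ρ (y, j) (y, j) else ρ (ghzIndex j) (ghzIndex j')) =
        ρ (ghzIndex j) (ghzIndex j') +
          if j = j' then ∑ y ∈ Finset.univ.filter (fun y => y ≠ fun _ => j), ρ (y, j) (y, j)
          else 0 := by
    split_ifs with h
    · subst h
      rw [Finset.filter_ne']
      exact (Finset.add_sum_erase _ (fun y => ρ (y, j) (y, j)) (Finset.mem_univ _)).symm
    · rw [add_zero]
  simp only [sum_Kop_mul_mul_conjTranspose_eq_sum_single, P0N_mul_mul_P0N, hcoeff, single_add,
    Finset.sum_add_distrib, kronPow_Emat_kronecker_Emat, smul_single, smul_eq_mul, mul_one]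
  congr 1
  refine Finset.sum_congr rfl fun j _ => ?_
  simp only [apply_ite (single _ _), single_zero, Finset.sum_ite_eq, Finset.mem_univ, if_true,
    single_sum]

theorem sum_Kop_mul_mul_conjTranspose_of_P0N
    {X : Matrix ((Fin N → Fin d) × Fin d) ((Fin N → Fin d) × Fin d) ℂ}
    (hX : P0N d N * X * P0N d N = X) :
    ∑ idx : Fin d → Fin N → Fin d, Kop d N idx * X * (Kop d N idx)ᴴ = X := by
  have hoff : ∑ j : Fin d,
      ∑ y ∈ Finset.univ.filter (fun y : Fin N → Fin d => y ≠ fun _ => j),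
        X (y, j) (y, j) • (kronPow d N (fun _ => Emat d j j) ⊗ₖ Emat d j j) = 0 :=
    Finset.sum_eq_zero fun j _ => Finset.sum_eq_zero fun y hy => by
      rw [apply_self_eq_zero_of_P0N_mul_mul_P0N hX (Finset.mem_filter.mp hy).2, zero_smul]
  rw [sum_Kop_mul_mul_conjTranspose_eq, hoff, add_zero, hX]

theorem sum_one_kronecker_Kop_mul_mul_conjTranspose_of_P0N {D : ℕ}
    {ρ : Matrix (Fin D × ((Fin N → Fin d) × Fin d)) (Fin D × ((Fin N → Fin d) × Fin d)) ℂ}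
    (hρ : ((1 : Matrix (Fin D) (Fin D) ℂ) ⊗ₖ P0N d N) * ρ *
      ((1 : Matrix (Fin D) (Fin D) ℂ) ⊗ₖ P0N d N) = ρ) :
    ∑ idx : Fin d → Fin N → Fin d,
      ((1 : Matrix (Fin D) (Fin D) ℂ) ⊗ₖ Kop d N idx) * ρ *
        ((1 : Matrix (Fin D) (Fin D) ℂ) ⊗ₖ Kop d N idx)ᴴ = ρ := by
  refine ext_of_submatrix_prodMk fun a b => ?_
  have hblock := submatrix_one_kronecker_mul_mul_one_kronecker (P0N d N) ρ (P0N d N) a b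
  rw [hρ] at hblock
  simp only [submatrix_sum, conjTranspose_kronecker, conjTranspose_one,
    submatrix_one_kronecker_mul_mul_one_kronecker]
  exact sum_Kop_mul_mul_conjTranspose_of_P0N hblock.symm

end Shift

end ControlledOrder

theorem stmt_19_general (d N D : ℕ) [NeZero d] :
    (∀ ρ : Matrix ((Fin N → Fin d) × Fin d) ((Fin N → Fin d) × Fin d) ℂ,
      ∑ idx : Fin d → Fin N → Fin d, Kop d N idx * ρ * (Kop d N idx)ᴴ =
        P0N d N * ρ * P0N d N +
          ∑ j : Fin d,
            ∑ y ∈ Finset.univ.filter (fun y : Fin N → Fin d => y ≠ fun _ => j),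
              ρ (y, j) (y, j) • (kronPow d N (fun _ => Emat d j j) ⊗ₖ Emat d j j)) ∧
    (∀ ρ : Matrix (Fin D × ((Fin N → Fin d) × Fin d)) (Fin D × ((Fin N → Fin d) × Fin d)) ℂ,
      ((1 : Matrix (Fin D) (Fin D) ℂ) ⊗ₖ P0N d N) * ρ *
          ((1 : Matrix (Fin D) (Fin D) ℂ) ⊗ₖ P0N d N) = ρ →
        ∑ idx : Fin d → Fin N → Fin d,
          ((1 : Matrix (Fin D) (Fin D) ℂ) ⊗ₖ Kop d N idx) * ρ *
            ((1 : Matrix (Fin D) (Fin D) ℂ) ⊗ₖ Kop d N idx)ᴴ = ρ) ∧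
    (∑ idx : Fin d → Fin N → Fin d,
        ((1 : Matrix (Fin d) (Fin d) ℂ) ⊗ₖ Kop d N idx) *
            vecMulVec (GHZN d N) (star (GHZN d N)) *
          ((1 : Matrix (Fin d) (Fin d) ℂ) ⊗ₖ Kop d N idx)ᴴ =
      vecMulVec (GHZN d N) (star (GHZN d N))) :=
  ⟨sum_Kop_mul_mul_conjTranspose_eq, fun _ => sum_one_kronecker_Kop_mul_mul_conjTranspose_of_P0N,
    sum_one_kronecker_Kop_mul_mul_conjTranspose_of_P0N one_kronecker_P0N_mul_vecMulVec_GHZN_mul⟩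

/-- Lemma 10 and the if-part of Theorem 3: (a) explicit form of the `N`-line
controlled-order channel; (b) every state supported on `I_D ⊗ P₀^N` is left invariant; in
particular (for `D = d`) the `(N+2)`-partite GHZ state is preserved. -/
theorem stmt_19 (d N D : ℕ) [NeZero d] (hN : 1 ≤ N) :
    (∀ ρ : Matrix ((Fin N → Fin d) × Fin d) ((Fin N → Fin d) × Fin d) ℂ,
      ∑ idx : Fin d → Fin N → Fin d, Kop d N idx * ρ * (Kop d N idx)ᴴ =
        P0N d N * ρ * P0N d N +
          ∑ j : Fin d,
            ∑ y ∈ Finset.univ.filter (fun y : Fin N → Fin d => y ≠ fun _ => j),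
              ρ (y, j) (y, j) • (kronPow d N (fun _ => Emat d j j) ⊗ₖ Emat d j j)) ∧
    (∀ ρ : Matrix (Fin D × ((Fin N → Fin d) × Fin d)) (Fin D × ((Fin N → Fin d) × Fin d)) ℂ,
      ((1 : Matrix (Fin D) (Fin D) ℂ) ⊗ₖ P0N d N) * ρ *
          ((1 : Matrix (Fin D) (Fin D) ℂ) ⊗ₖ P0N d N) = ρ →
        ∑ idx : Fin d → Fin N → Fin d,
          ((1 : Matrix (Fin D) (Fin D) ℂ) ⊗ₖ Kop d N idx) * ρ *
            ((1 : Matrix (Fin D) (Fin D) ℂ) ⊗ₖ Kop d N idx)ᴴ = ρ) ∧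
    (∑ idx : Fin d → Fin N → Fin d,
        ((1 : Matrix (Fin d) (Fin d) ℂ) ⊗ₖ Kop d N idx) *
            vecMulVec (GHZN d N) (star (GHZN d N)) *
          ((1 : Matrix (Fin d) (Fin d) ℂ) ⊗ₖ Kop d N idx)ᴴ =
      vecMulVec (GHZN d N) (star (GHZN d N))) :=
  stmt_19_general d N D
end
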